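/- arXiv:1707.01892 — 9 statements merged into one kernel-verified Lean document; each statement's English description precedes it below -/
import Mathlib

section
/- Let (X, τ, q) be a continuous IFSw admitting a strictly positive continuous eigenfunction of the transfer operator B_q. If ν is a Borel probability measure and ρ > 0 satisfies L_q ν = ρ·ν, then ρ = ρ(B_q), the spectral radius of B_q acting on C(X,ℝ). In particular every eigenvalue of the Markov operator associated to an eigenprobability equals the spectral radius. -/
/-!
Integrating the eigen-equation `B h = λ h` against `ν` gives `λ ∫ h dν = ρ ∫ h dν`, so `λ = ρ`.
Since `B` is a positive operator and `m ≤ h` for some `m > 0`, every `f` satisfies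
`|f| ≤ (‖f‖ / m) h`, hence `|Bᴺ f| ≤ (‖f‖ / m) λᴺ h`. Together with `Bᴺ h = λᴺ h` this squeezes
`‖Bᴺ‖` between `λᴺ` and `(‖h‖ / m) λᴺ`, and the `N`-th roots converge to `λ = ρ`.
-/

open MeasureTheory Filter Topology

theorem tendsto_mul_pow_rpow_inv {C r : ℝ} (hC : 0 < C) (hr : 0 ≤ r) :
    Tendsto (fun N : ℕ => (C * r ^ N) ^ (N : ℝ)⁻¹) atTop (𝓝 r) := by
  have hroot : Tendsto (fun N : ℕ => C ^ (N : ℝ)⁻¹) atTop (𝓝 1) := by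
    simpa [Function.comp_def] using ((Real.continuousAt_const_rpow hC.ne').tendsto.comp
      (tendsto_inv_atTop_nhds_zero_nat (𝕜 := ℝ)))
  refine (one_mul r ▸ hroot.mul_const r).congr' ?_
  filter_upwards [eventually_ne_atTop 0] with N hN
  rw [Real.mul_rpow hC.le (pow_nonneg hr N), Real.pow_rpow_inv_natCast hr hN]

theorem tendsto_rpow_inv_of_pow_bounds {a : ℕ → ℝ} {r c C : ℝ} (hr : 0 ≤ r) (hc : 0 < c)
    (hC : 0 < C) (hlow : ∀ N, c * r ^ N ≤ a N) (hup : ∀ N, a N ≤ C * r ^ N) :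
    Tendsto (fun N : ℕ => a N ^ (N : ℝ)⁻¹) atTop (𝓝 r) :=
  tendsto_of_tendsto_of_tendsto_of_le_of_le (tendsto_mul_pow_rpow_inv hc hr)
    (tendsto_mul_pow_rpow_inv hC hr)
    (fun N => Real.rpow_le_rpow (mul_nonneg hc.le (pow_nonneg hr N)) (hlow N) (by positivity))
    (fun N => Real.rpow_le_rpow ((mul_nonneg hc.le (pow_nonneg hr N)).trans (hlow N)) (hup N)
      (by positivity))

theorem ContinuousLinearMap.opNorm_le_norm_apply_div_of_monotone {X : Type*}
    [TopologicalSpace X] [CompactSpace X]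
    (S : C(X, ℝ) →L[ℝ] C(X, ℝ)) (hS : Monotone S) {h : C(X, ℝ)} {m : ℝ} (hm : 0 < m)
    (hmh : ∀ x, m ≤ h x) : ‖S‖ ≤ ‖S h‖ / m := by
  refine S.opNorm_le_bound (by positivity) fun f => ?_
  set c := ‖f‖ / m
  have hfh : ∀ x, |f x| ≤ c * h x := fun x =>
    calc |f x| ≤ ‖f‖ := f.norm_coe_le_norm x
      _ = c * m := (div_mul_cancel₀ _ hm.ne').symm
      _ ≤ c * h x := by gcongr; exact hmh x
  have hup := hS (ContinuousMap.le_def.2 fun x => (le_abs_self (f x)).trans (hfh x) :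
    f ≤ c • h)
  have hlow := hS (ContinuousMap.le_def.2 fun x => (neg_le_abs (f x)).trans (hfh x) :
    -f ≤ c • h)
  rw [map_smul] at hup
  rw [map_neg, map_smul] at hlow
  refine (ContinuousMap.norm_le _ (by positivity)).2 fun x => ?_
  have hup := ContinuousMap.le_def.1 hup x
  have hlow := ContinuousMap.le_def.1 hlow x
  have hShx : S h x ≤ ‖S h‖ := (le_abs_self _).trans ((S h).norm_coe_le_norm x)
  simp only [ContinuousMap.smul_apply, ContinuousMap.neg_apply, smul_eq_mul] at hup hlow
  calc ‖S f x‖ ≤ c * S h x := abs_le.2 ⟨by linarith, hup⟩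
    _ ≤ c * ‖S h‖ := by gcongr
    _ = ‖S h‖ / m * ‖f‖ := by ring

theorem monotone_of_apply_eq_sum_mul_comp {X : Type*} [TopologicalSpace X] {n : ℕ}
    (τ : Fin n → X → X) (q : Fin n → X → ℝ) (hq : ∀ i x, 0 ≤ q i x)
    (B : C(X, ℝ) → C(X, ℝ))
    (hB : ∀ (f : C(X, ℝ)) (x : X), B f x = ∑ i : Fin n, q i x * f (τ i x)) : Monotone B :=
  fun f g hfg => ContinuousMap.le_def.2 fun x => by
    simp only [hB]
    gcongr with i
    · exact hq i x
    · exact hfg _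

theorem stmt4_general {X : Type*} [MetricSpace X] [CompactSpace X]
    [MeasurableSpace X] [BorelSpace X]
    {n : ℕ} (τ : Fin n → X → X)
    (q : Fin n → X → ℝ) (hq0 : ∀ i x, 0 < q i x)
    (B : C(X, ℝ) →L[ℝ] C(X, ℝ))
    (hB : ∀ (f : C(X, ℝ)) (x : X), B f x = ∑ i : Fin n, q i x * f (τ i x))
    (h : C(X, ℝ)) (hh : ∀ x, 0 < h x) (lam : ℝ) (heig : B h = lam • h)
    (ν : Measure X) [IsProbabilityMeasure ν] (ρ : ℝ) (hρ : 0 < ρ)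
    (hν : ∀ f : C(X, ℝ), ∫ x, (B f) x ∂ν = ρ * ∫ x, f x ∂ν) :
    Tendsto (fun N : ℕ => ‖B ^ N‖ ^ ((N : ℝ)⁻¹)) atTop (nhds ρ) := by
  obtain ⟨m, hm, hmh⟩ := isCompact_univ.exists_forall_le' h.continuous.continuousOn
    fun x _ => hh x
  have hint_pos : 0 < ∫ x, h x ∂ν := by
    have hint : Integrable h ν :=
      h.continuous.integrable_of_hasCompactSupport (HasCompactSupport.of_compactSpace _)
    calc 0 < m := hm
      _ = ∫ _, m ∂ν := by simp
      _ ≤ ∫ x, h x ∂ν := integral_mono (integrable_const m) hint fun x => hmh x trivial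
  have hlam : lam = ρ := by
    have := hν h
    simp only [heig, ContinuousMap.coe_smul, Pi.smul_apply, smul_eq_mul, integral_const_mul]
      at this
    exact mul_right_cancel₀ hint_pos.ne' this
  subst hlam
  have hmono : Monotone B :=
    monotone_of_apply_eq_sum_mul_comp τ q (fun i x => (hq0 i x).le) B hB
  have hpow : ∀ N : ℕ, (B ^ N) h = lam ^ N • h := fun N => by
    induction N with
    | zero => simp
    | succ k ih => rw [pow_succ', mul_apply_eq_comp, ih, map_smul, heig, smul_smul, pow_succ]
  have hh_norm : 0 < ‖h‖ := norm_pos_iff.2 fun h0 => by simp [h0] at hint_pos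
  refine tendsto_rpow_inv_of_pow_bounds hρ.le one_pos (div_pos hh_norm hm) (fun N => ?_) fun N => ?_
  · have := (B ^ N).le_opNorm h
    rw [hpow, norm_smul, Real.norm_of_nonneg (pow_nonneg hρ.le N)] at this
    rw [one_mul]
    exact le_of_mul_le_mul_right this hh_norm
  · have := (B ^ N).opNorm_le_norm_apply_div_of_monotone
      (FunLike.coe_pow_eq_iterate B N ▸ hmono.iterate N) hm fun x => hmh x trivial
    rwa [hpow, norm_smul, Real.norm_of_nonneg (pow_nonneg hρ.le N), mul_comm, mul_div_right_comm]
      at this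

/-- If the transfer operator of a continuous IFSw with positive weights admits a
strictly positive continuous eigenfunction, then any eigenvalue `ρ > 0` of the
Markov operator associated to an eigenprobability `ν` equals the spectral
radius of `B_q` (expressed via Gelfand's formula). -/
theorem stmt4 {X : Type*} [MetricSpace X] [CompactSpace X]
    [MeasurableSpace X] [BorelSpace X]
    {n : ℕ} (τ : Fin n → X → X) (hτ : ∀ i, Continuous (τ i))
    (q : Fin n → X → ℝ) (hq : ∀ i, Continuous (q i)) (hq0 : ∀ i x, 0 < q i x)
    (B : C(X, ℝ) →L[ℝ] C(X, ℝ))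
    (hB : ∀ (f : C(X, ℝ)) (x : X), B f x = ∑ i : Fin n, q i x * f (τ i x))
    (h : C(X, ℝ)) (hh : ∀ x, 0 < h x) (lam : ℝ) (heig : B h = lam • h)
    (ν : Measure X) [IsProbabilityMeasure ν] (ρ : ℝ) (hρ : 0 < ρ)
    (hν : ∀ f : C(X, ℝ), ∫ x, (B f) x ∂ν = ρ * ∫ x, f x ∂ν) :
    Tendsto (fun N : ℕ => ‖B ^ N‖ ^ ((N : ℝ)⁻¹)) atTop (nhds ρ) :=
  stmt4_general τ q hq0 B hB h hh lam heig ν ρ hρ hν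
end

section
/- Let X = [0,1], τ₀(x) = x, τ₁(x) = 1 - x, and weights q_i(x) = ψ(τ_i(x)) for a continuous strictly positive ψ: [0,1] → ℝ. Then B_q^N(1)(x) = (ψ(x) + ψ(1-x))^N for all N ≥ 1 and x ∈ [0,1]. Consequently, B_q admits a strictly positive continuous eigenfunction associated to a positive eigenvalue if and only if ψ(x) + ψ(1-x) is constant on [0,1]; in that case the constant function 1 is an eigenfunction and the constant value equals the spectral radius ρ(B_q). -/
open Filter unitInterval

/-- The example on `X = [0,1]` with `τ₀ = id`, `τ₁(x) = 1 - x` and weights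
`q_i = ψ∘τ_i`: the iterates satisfy `B_q^N(1)(x) = (ψ(x)+ψ(1-x))^N`; a strictly
positive continuous eigenfunction with positive eigenvalue exists iff
`ψ(x)+ψ(1-x)` is constant, in which case `1` is an eigenfunction and the
constant equals the spectral radius (Gelfand's formula). -/
theorem stmt6 (ψ : C(unitInterval, ℝ)) (hψ : ∀ x, 0 < ψ x)
    (B : C(unitInterval, ℝ) →L[ℝ] C(unitInterval, ℝ))
    (hB : ∀ (f : C(unitInterval, ℝ)) (x : unitInterval),
      B f x = ψ x * f x + ψ (unitInterval.symm x) * f (unitInterval.symm x)) :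
    (∀ N : ℕ, 1 ≤ N → ∀ x,
        (B ^ N) 1 x = (ψ x + ψ (unitInterval.symm x)) ^ N) ∧
      ((∃ (h : C(unitInterval, ℝ)) (ρ : ℝ),
          (∀ x, 0 < h x) ∧ 0 < ρ ∧ B h = ρ • h) ↔
        ∃ c : ℝ, ∀ x, ψ x + ψ (unitInterval.symm x) = c) ∧
      (∀ c : ℝ, (∀ x, ψ x + ψ (unitInterval.symm x) = c) →
        B 1 = c • 1 ∧
          Tendsto (fun N : ℕ => ‖B ^ N‖ ^ ((N : ℝ)⁻¹)) atTop (nhds c)) := by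
  have key' : ∀ N : ℕ, ∀ x,
      (B ^ (N + 1)) (1 : C(unitInterval, ℝ)) x
        = (ψ x + ψ (unitInterval.symm x)) ^ (N + 1) := by
    intro N
    induction N with
    | zero =>
      intro x
      rw [pow_one, pow_one, hB]
      simp
    | succ n ih =>
      intro x
      have hmul : (B ^ (n + 1 + 1)) (1 : C(unitInterval, ℝ))
          = B ((B ^ (n + 1)) 1) := by
        rw [pow_succ']
        rfl
      rw [hmul, hB, ih x, ih (unitInterval.symm x), unitInterval.symm_symm]
      ring
  have key : ∀ N : ℕ, 1 ≤ N → ∀ x,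
      (B ^ N) (1 : C(unitInterval, ℝ)) x
        = (ψ x + ψ (unitInterval.symm x)) ^ N := by
    intro N hN x
    obtain ⟨n, rfl⟩ := Nat.exists_eq_add_of_le hN
    simpa [add_comm] using key' n x
  refine ⟨key, ?_, ?_⟩
  · constructor
    · rintro ⟨h, ρ, hh, hρ, heq⟩
      refine ⟨ρ, fun x => ?_⟩
      have ev : ∀ y, ψ y * h y + ψ (unitInterval.symm y) * h (unitInterval.symm y)
          = ρ * h y := by
        intro y
        have := DFunLike.congr_fun heq y
        rw [hB] at this
        simpa using this
      have e1 := ev x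
      have e2 := ev (unitInterval.symm x)
      rw [unitInterval.symm_symm] at e2
      have hxx : ρ * h x = ρ * h (unitInterval.symm x) := by linarith
      have hsym : h x = h (unitInterval.symm x) := mul_left_cancel₀ hρ.ne' hxx
      have : (ψ x + ψ (unitInterval.symm x)) * h x = ρ * h x := by
        rw [← e1, hsym]; ring
      exact mul_right_cancel₀ (hh x).ne' this
    · rintro ⟨c, hc⟩
      have hc0 : 0 < c := by
        rw [← hc ⟨0, by norm_num, by norm_num⟩]
        have := hψ ⟨0, by norm_num, by norm_num⟩
        have := hψ (unitInterval.symm ⟨0, by norm_num, by norm_num⟩)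
        linarith
      refine ⟨1, c, fun x => by norm_num, hc0, ?_⟩
      ext x
      rw [hB]
      simp [hc x]
  · intro c hc
    have hc0 : 0 < c := by
      rw [← hc ⟨0, by norm_num, by norm_num⟩]
      have := hψ ⟨0, by norm_num, by norm_num⟩
      have := hψ (unitInterval.symm ⟨0, by norm_num, by norm_num⟩)
      linarith
    have hB1 : B (1 : C(unitInterval, ℝ)) = c • 1 := by
      ext x
      rw [hB]
      simp [hc x]
    refine ⟨hB1, ?_⟩
    have hBle : ‖B‖ ≤ c := by
      apply ContinuousLinearMap.opNorm_le_bound _ hc0.le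
      intro f
      apply ContinuousMap.norm_le _ (by positivity) |>.mpr
      intro x
      rw [hB]
      have h1 : |f x| ≤ ‖f‖ := ContinuousMap.norm_coe_le_norm f x
      have h2 : |f (unitInterval.symm x)| ≤ ‖f‖ :=
        ContinuousMap.norm_coe_le_norm f (unitInterval.symm x)
      have hp1 := hψ x
      have hp2 := hψ (unitInterval.symm x)
      calc ‖ψ x * f x + ψ (unitInterval.symm x) * f (unitInterval.symm x)‖
          ≤ ‖ψ x * f x‖ + ‖ψ (unitInterval.symm x) * f (unitInterval.symm x)‖ :=
            norm_add_le _ _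
        _ = ψ x * |f x| + ψ (unitInterval.symm x) * |f (unitInterval.symm x)| := by
            rw [Real.norm_eq_abs, Real.norm_eq_abs, abs_mul, abs_mul,
              abs_of_pos hp1, abs_of_pos hp2]
        _ ≤ ψ x * ‖f‖ + ψ (unitInterval.symm x) * ‖f‖ := by
            gcongr <;> simp [Real.norm_eq_abs] at h1 h2 ⊢ <;> linarith
        _ = c * ‖f‖ := by rw [← hc x]; ring
    have hnorm : ∀ N : ℕ, 1 ≤ N → ‖B ^ N‖ = c ^ N := by
      intro N hN
      have hup : ‖B ^ N‖ ≤ c ^ N := by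
        calc ‖B ^ N‖ ≤ ‖B‖ ^ N := norm_pow_le' B hN
          _ ≤ c ^ N := pow_le_pow_left₀ (norm_nonneg B) hBle N
      have hBN1 : (B ^ N) (1 : C(unitInterval, ℝ)) = (c ^ N) • 1 := by
        ext x
        rw [key N hN x, hc x]
        simp
      have hlow : c ^ N ≤ ‖B ^ N‖ := by
        have h1 : ‖(B ^ N) (1 : C(unitInterval, ℝ))‖ = c ^ N := by
          have hns := norm_smul (c ^ N) (1 : C(unitInterval, ℝ))
          rw [hBN1, hns, norm_one, Real.norm_eq_abs,
            abs_of_pos (pow_pos hc0 N), mul_one]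
        have h2 : ‖(B ^ N) (1 : C(unitInterval, ℝ))‖ ≤ ‖B ^ N‖ * ‖(1 : C(unitInterval, ℝ))‖ :=
          (B ^ N).le_opNorm 1
        rw [norm_one, mul_one] at h2
        linarith
      linarith
    have hev : ∀ᶠ N : ℕ in atTop, c = ‖B ^ N‖ ^ ((N : ℝ)⁻¹) := by
      filter_upwards [eventually_ge_atTop 1] with N hN
      rw [hnorm N hN, ← Real.rpow_natCast c N, ← Real.rpow_mul hc0.le,
        mul_inv_cancel₀ (show (N : ℝ) ≠ 0 from Nat.cast_ne_zero.mpr (by omega)),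
        Real.rpow_one]
    exact Tendsto.congr' hev tendsto_const_nhds
end

section
/- Fix x₀ ∈ X and a sequence (i_j) in {0,…,n-1}, and set x_{j+1} = τ_{i_j}(x_j). Then any weak-* cluster point μ̂ of the sequence of empirical measures μ̂_N = (1/N) Σ_{j=0}^{N-1} δ_{(x_j, i_j)} on Ω = X × {0,…,n-1} is a holonomic probability measure: ∫ [f(τ_i(x)) - f(x)] dμ̂(x,i) = 0 for all f ∈ C(X,ℝ). -/
open MeasureTheory Filter Topology BoundedContinuousFunction
open scoped ENNReal

/-- Any weak-* cluster point of the empirical measures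
`μ̂_N = (1/N) Σ_{j<N} δ_{(x_j, i_j)}` along an orbit `x_{j+1} = τ_{i_j}(x_j)`
is a holonomic probability measure. -/
theorem stmt9 {X : Type*} [MetricSpace X] [CompactSpace X]
    [MeasurableSpace X] [BorelSpace X]
    {n : ℕ} (τ : Fin n → X → X) (hτ : ∀ i, Continuous (τ i))
    (xs : ℕ → X) (w : ℕ → Fin n) (hx : ∀ j, xs (j + 1) = τ (w j) (xs j))
    (e : ℕ → ProbabilityMeasure (X × Fin n))
    (he : ∀ N : ℕ, 1 ≤ N → (e N : Measure (X × Fin n)) =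
      (N : ℝ≥0∞)⁻¹ • ∑ j ∈ Finset.range N, Measure.dirac (xs j, w j))
    (μ : ProbabilityMeasure (X × Fin n))
    (hμ : MapClusterPt μ atTop e) :
    ∀ f : C(X, ℝ),
      ∫ p, (f (τ p.2 p.1) - f p.1) ∂(μ : Measure (X × Fin n)) = 0 := by
  intro f
  -- the test function as a bounded continuous function
  have gtau : Continuous (fun p : X × Fin n => τ p.2 p.1) := by
    rw [continuous_iff_continuousAt]
    rintro ⟨x, i⟩
    have hev : ∀ᶠ p : X × Fin n in 𝓝 (x, i), τ i p.1 = τ p.2 p.1 := by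
      filter_upwards [((isOpen_discrete ({i} : Set (Fin n))).preimage
        continuous_snd).mem_nhds (Set.mem_preimage.mpr rfl)] with p hp
      simp only [Set.mem_preimage, Set.mem_singleton_iff] at hp
      rw [hp]
    exact (((hτ i).comp continuous_fst).continuousAt).congr hev
  have gcont : Continuous (fun p : X × Fin n => f (τ p.2 p.1) - f p.1) :=
    (f.continuous.comp gtau).sub (f.continuous.comp continuous_fst)
  set g : (X × Fin n) →ᵇ ℝ :=
    BoundedContinuousFunction.mkOfCompact ⟨_, gcont⟩ with hg
  -- integral against the empirical measures
  have hval : ∀ N : ℕ, 1 ≤ N →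
      ∫ p, g p ∂(e N : Measure (X × Fin n)) = (f (xs N) - f (xs 0)) / N := by
    intro N hN
    rw [he N hN, integral_smul_measure,
      integral_finset_sum_measure (fun i _ => g.integrable _)]
    have : ∀ j ∈ Finset.range N,
        ∫ p, g p ∂(Measure.dirac (xs j, w j)) = f (xs (j + 1)) - f (xs j) := by
      intro j _
      rw [integral_dirac]
      simp [hg, hx j]
    rw [Finset.sum_congr rfl this, Finset.sum_range_sub (fun j => f (xs j))]
    rw [ENNReal.toReal_inv]
    simp [div_eq_inv_mul]
  -- the integrals against the empirical measures tend to zero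
  have htend : Tendsto (fun N => ∫ p, g p ∂(e N : Measure (X × Fin n))) atTop (𝓝 0) := by
    have hb : ∀ N : ℕ, 1 ≤ N →
        |∫ p, g p ∂(e N : Measure (X × Fin n))| ≤ (2 * ‖f‖) / N := by
      intro N hN
      rw [hval N hN, abs_div, abs_of_nonneg (by positivity : (0:ℝ) ≤ (N:ℝ))]
      gcongr
      calc |f (xs N) - f (xs 0)| ≤ |f (xs N)| + |f (xs 0)| := abs_sub _ _
        _ ≤ ‖f‖ + ‖f‖ := add_le_add (f.norm_coe_le_norm _) (f.norm_coe_le_norm _)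
        _ = 2 * ‖f‖ := by ring
    have h0 : Tendsto (fun N : ℕ => (2 * ‖f‖) / N) atTop (𝓝 0) :=
      tendsto_const_nhds.div_atTop tendsto_natCast_atTop_atTop
    rw [tendsto_iff_norm_sub_tendsto_zero]
    apply squeeze_zero' (Eventually.of_forall fun N => norm_nonneg _) _ h0
    filter_upwards [eventually_ge_atTop 1] with N hN
    simpa using hb N hN
  -- the integral against μ is a cluster point of these integrals
  have hcl : MapClusterPt (∫ p, g p ∂(μ : Measure (X × Fin n))) atTop
      (fun N => ∫ p, g p ∂(e N : Measure (X × Fin n))) :=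
    hμ.tendsto_comp
      ((ProbabilityMeasure.continuous_integral_boundedContinuousFunction g).tendsto μ)
  have : (∫ p, g p ∂(μ : Measure (X × Fin n))) = 0 := by
    have hne : (𝓝 (∫ p, g p ∂(μ : Measure (X × Fin n))) ⊓
        map (fun N => ∫ p, g p ∂(e N : Measure (X × Fin n))) atTop).NeBot := hcl
    have hle : map (fun N => ∫ p, g p ∂(e N : Measure (X × Fin n))) atTop ≤ 𝓝 0 := htend
    exact t2_iff_nhds.mp inferInstance
      ((hne.mono (inf_le_inf_left _ hle)))
  simpa [hg] using this
end

section
/- Let μ̂ be a holonomic probability measure for the IFS (X, τ) with disintegration dμ̂(x,i) = dν_x(i)dν(x) over the first-coordinate projection, and q_i(x) = ν_x({i}). Then the average entropy h_a(μ̂) = -∫_X Σ_i q_i(x) ln q_i(x) dν(x) and the variational entropy h_v(μ̂) = inf over positive continuous g of ∫_X ln(B₁(g)/g) dν satisfy 0 ≤ h_a(μ̂) ≤ h_v(μ̂) ≤ ln n, where B₁(g)(x) = Σ_i g(τ_i(x)). -/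
open MeasureTheory

private lemma gibbs_aux {n : ℕ} (p a : Fin n → ℝ) (hp : ∀ i, 0 ≤ p i)
    (hs : ∑ i, p i = 1) (ha : ∀ i, 0 < a i) :
    ∑ i, (p i * Real.log (a i) - p i * Real.log (p i)) ≤ Real.log (∑ i, a i) := by
  have hne : (Finset.univ : Finset (Fin n)).Nonempty := by
    by_contra h
    rw [Finset.not_nonempty_iff_eq_empty] at h
    rw [h, Finset.sum_empty] at hs; norm_num at hs
  set S := ∑ i, a i with hS
  have hS0 : 0 < S := Finset.sum_pos (fun i _ => ha i) hne
  have key : ∀ i, p i * Real.log (a i) - p i * Real.log (p i) - p i * Real.log S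
      ≤ a i / S - p i := by
    intro i
    rcases eq_or_lt_of_le (hp i) with h0 | h0
    · rw [← h0]; simp
      exact div_nonneg (ha i).le hS0.le
    · have harg : (0:ℝ) < a i / (p i * S) := div_pos (ha i) (mul_pos h0 hS0)
      have h1 := Real.log_le_sub_one_of_pos harg
      have hlog : Real.log (a i / (p i * S))
          = Real.log (a i) - Real.log (p i) - Real.log S := by
        rw [Real.log_div (ne_of_gt (ha i)) (mul_pos h0 hS0).ne',
          Real.log_mul (ne_of_gt h0) (ne_of_gt hS0)]
        ring
      rw [hlog] at h1
      have h2 := mul_le_mul_of_nonneg_left h1 (hp i)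
      have h3 : p i * (a i / (p i * S) - 1) = a i / S - p i := by
        field_simp
      calc p i * Real.log (a i) - p i * Real.log (p i) - p i * Real.log S
          = p i * (Real.log (a i) - Real.log (p i) - Real.log S) := by ring
        _ ≤ p i * (a i / (p i * S) - 1) := h2
        _ = a i / S - p i := h3
  have hsum := Finset.sum_le_sum (fun i (_ : i ∈ Finset.univ) => key i)
  have hlhs : ∑ i, (p i * Real.log (a i) - p i * Real.log (p i) - p i * Real.log S)
      = ∑ i, (p i * Real.log (a i) - p i * Real.log (p i)) - Real.log S := by
    rw [Finset.sum_sub_distrib, ← Finset.sum_mul, hs, one_mul]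
  have hrhs : ∑ i, (a i / S - p i) = 0 := by
    have h4 : ∑ i, a i / S = 1 := by
      rw [← Finset.sum_div, ← hS, div_self (ne_of_gt hS0)]
    rw [Finset.sum_sub_distrib, h4, hs, sub_self]
  rw [hlhs, hrhs] at hsum
  linarith

private lemma mul_log_abs_le {t : ℝ} (h0 : 0 ≤ t) (h1 : t ≤ 1) : |t * Real.log t| ≤ 1 := by
  rcases eq_or_lt_of_le h0 with h | h
  · simp [← h]
  · have hlog : Real.log t ≤ 0 := Real.log_nonpos h0 h1
    rw [abs_of_nonpos (mul_nonpos_iff.mpr (Or.inl ⟨h0, hlog⟩))]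
    have hl : Real.log t⁻¹ ≤ t⁻¹ - 1 := Real.log_le_sub_one_of_pos (by positivity)
    rw [Real.log_inv] at hl
    calc -(t * Real.log t) = t * (-Real.log t) := by ring
      _ ≤ t * (t⁻¹ - 1) := mul_le_mul_of_nonneg_left hl h0
      _ = 1 - t := by rw [mul_sub, mul_inv_cancel₀ (ne_of_gt h), mul_one]
      _ ≤ 1 := by linarith

private lemma integrable_of_bdd {X : Type*} [MeasurableSpace X] (ν : Measure X)
    [IsFiniteMeasure ν] {f : X → ℝ} (hf : Measurable f) {C : ℝ} (h : ∀ x, ‖f x‖ ≤ C) :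
    Integrable f ν :=
  ⟨hf.aestronglyMeasurable, HasFiniteIntegral.of_bounded (ae_of_all _ h)⟩

private lemma cont_prod {X : Type*} [TopologicalSpace X] {n : ℕ} {f : Fin n → X → ℝ}
    (hf : ∀ i, Continuous (f i)) : Continuous fun p : X × Fin n => f p.2 p.1 := by
  rw [continuous_iff_continuousAt]
  rintro ⟨x, i⟩
  have hev : ∀ᶠ p : X × Fin n in nhds (x, i), f i p.1 = f p.2 p.1 := by
    filter_upwards [((isOpen_discrete ({i} : Set (Fin n))).preimage
      continuous_snd).mem_nhds (by simp : ((x, i) : X × Fin n) ∈ _)] with p hp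
    have : p.2 = i := hp
    rw [this]
  exact ContinuousAt.congr ((hf i).comp continuous_fst).continuousAt hev

/-- For a holonomic probability measure `μ̂` with disintegration
`dμ̂(x,i) = dν_x(i) dν(x)`, `q_i(x) = ν_x({i})`, the average entropy and the
variational entropy satisfy `0 ≤ h_a(μ̂) ≤ h_v(μ̂) ≤ ln n`. -/
theorem stmt11 {X : Type*} [MetricSpace X] [CompactSpace X]
    [MeasurableSpace X] [BorelSpace X]
    {n : ℕ} (hn : 0 < n)
    (τ : Fin n → X → X) (hτ : ∀ i, Continuous (τ i))
    (μh : Measure (X × Fin n)) [IsProbabilityMeasure μh]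
    (hol : ∀ f : C(X, ℝ), ∫ p, (f (τ p.2 p.1) - f p.1) ∂μh = 0)
    (q : Fin n → X → ℝ) (hqm : ∀ i, Measurable (q i))
    (hq0 : ∀ i x, 0 ≤ q i x) (hq1 : ∀ x, ∑ i, q i x = 1)
    (ν : Measure X) (hν : ν = μh.map Prod.fst)
    (hdis : ∀ F : C(X × Fin n, ℝ),
      ∫ p, F p ∂μh = ∫ x, ∑ i, q i x * F (x, i) ∂ν) :
    (0 ≤ -∫ x, ∑ i, q i x * Real.log (q i x) ∂ν) ∧
      ((-∫ x, ∑ i, q i x * Real.log (q i x) ∂ν) ≤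
        ⨅ g : {g : C(X, ℝ) // ∀ x, 0 < g x},
          ∫ x, Real.log ((∑ i, g.1 (τ i x)) / g.1 x) ∂ν) ∧
      ((⨅ g : {g : C(X, ℝ) // ∀ x, 0 < g x},
          ∫ x, Real.log ((∑ i, g.1 (τ i x)) / g.1 x) ∂ν) ≤ Real.log n) := by
  haveI : IsProbabilityMeasure ν := by
    rw [hν]; exact Measure.isProbabilityMeasure_map measurable_fst.aemeasurable
  have hq1' : ∀ i x, q i x ≤ 1 := by
    intro i x
    calc q i x ≤ ∑ j, q j x :=
          Finset.single_le_sum (fun j _ => hq0 j x) (Finset.mem_univ i)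
      _ = 1 := hq1 x
  set A : X → ℝ := fun x => ∑ i, q i x * Real.log (q i x) with hA
  have hAm : Measurable A := Finset.measurable_sum _
    (fun i _ => (hqm i).mul (Real.measurable_log.comp (hqm i)))
  have hAbd : ∀ x, ‖A x‖ ≤ n := by
    intro x
    calc ‖A x‖ ≤ ∑ i, ‖q i x * Real.log (q i x)‖ := norm_sum_le _ _
      _ ≤ ∑ _i : Fin n, (1:ℝ) :=
          Finset.sum_le_sum fun i _ => mul_log_abs_le (hq0 i x) (hq1' i x)
      _ = n := by simp
  have hAint : Integrable A ν := integrable_of_bdd ν hAm hAbd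
  have hAnp : ∫ x, A x ∂ν ≤ 0 := integral_nonpos fun x =>
    Finset.sum_nonpos fun i _ =>
      mul_nonpos_iff.mpr (Or.inl ⟨hq0 i x, Real.log_nonpos (hq0 i x) (hq1' i x)⟩)
  have key : ∀ g : {g : C(X, ℝ) // ∀ x, 0 < g x},
      -∫ x, A x ∂ν ≤ ∫ x, Real.log ((∑ i, g.1 (τ i x)) / g.1 x) ∂ν := by
    rintro ⟨g, hg⟩
    have hgc : Continuous g := g.continuous
    have hlg : Continuous fun x => Real.log (g x) := hgc.log fun x => (hg x).ne'
    set u : X → ℝ := fun x => ∑ i, q i x * Real.log (g (τ i x)) with hu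
    set z : X → ℝ := fun x => Real.log (g x) with hz
    set w : X → ℝ := fun x => Real.log (∑ i, g (τ i x)) with hw
    have hBpos : ∀ x, 0 < ∑ i, g (τ i x) := fun x =>
      Finset.sum_pos (fun i _ => hg _) ⟨⟨0, hn⟩, Finset.mem_univ _⟩
    obtain ⟨C, hC⟩ := isCompact_univ.exists_bound_of_continuousOn hlg.continuousOn
    have hzint : Integrable z ν :=
      integrable_of_bdd ν hlg.measurable fun x => hC x (Set.mem_univ x)
    have hum : Measurable u := Finset.measurable_sum _ fun i _ =>
      (hqm i).mul (hlg.comp (hτ i)).measurable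
    have huint : Integrable u ν := integrable_of_bdd ν hum (C := n * C) (fun x => by
      calc ‖u x‖ ≤ ∑ i, ‖q i x * Real.log (g (τ i x))‖ := norm_sum_le _ _
        _ ≤ ∑ _i : Fin n, C := Finset.sum_le_sum fun i _ => by
            rw [norm_mul]
            calc ‖q i x‖ * ‖Real.log (g (τ i x))‖ ≤ 1 * C :=
                  mul_le_mul
                    (by rw [Real.norm_eq_abs, abs_of_nonneg (hq0 i x)]; exact hq1' i x)
                    (hC _ (Set.mem_univ _)) (norm_nonneg _) one_pos.le
              _ = C := one_mul C
        _ = n * C := by simp [mul_comm])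
    have hwc : Continuous w :=
      (continuous_finset_sum _ fun i _ => hgc.comp (hτ i)).log fun x => (hBpos x).ne'
    obtain ⟨D, hD⟩ := isCompact_univ.exists_bound_of_continuousOn hwc.continuousOn
    have hwint : Integrable w ν :=
      integrable_of_bdd ν hwc.measurable fun x => hD x (Set.mem_univ x)
    have hptw : ∀ x, u x - A x ≤ w x := by
      intro x
      have h := gibbs_aux (fun i => q i x) (fun i => g (τ i x))
        (fun i => hq0 i x) (hq1 x) (fun i => hg _)
      rw [Finset.sum_sub_distrib] at h
      exact h
    have hint1 : ∫ x, (u x - A x) ∂ν ≤ ∫ x, w x ∂ν :=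
      integral_mono (huint.sub hAint) hwint hptw
    rw [integral_sub huint hAint] at hint1
    have hF : Continuous fun p : X × Fin n =>
        Real.log (g (τ p.2 p.1)) - Real.log (g p.1) := by
      have h1 : Continuous fun p : X × Fin n => Real.log (g (τ p.2 p.1)) :=
        cont_prod fun i => hlg.comp (hτ i)
      exact h1.sub (hlg.comp continuous_fst)
    have h0 : ∫ p : X × Fin n, (Real.log (g (τ p.2 p.1)) - Real.log (g p.1)) ∂μh = 0 := by
      simpa using hol ⟨fun x => Real.log (g x), hlg⟩
    have h0' : ∫ p : X × Fin n, (Real.log (g (τ p.2 p.1)) - Real.log (g p.1)) ∂μh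
        = ∫ x, ∑ i, q i x * (Real.log (g (τ i x)) - Real.log (g x)) ∂ν := by
      simpa using hdis ⟨_, hF⟩
    have hzero : ∫ x, ∑ i, q i x * (Real.log (g (τ i x)) - Real.log (g x)) ∂ν = 0 := by
      rw [← h0', h0]
    have hsplit : ∀ x,
        ∑ i, q i x * (Real.log (g (τ i x)) - Real.log (g x)) = u x - z x := by
      intro x
      simp only [mul_sub, Finset.sum_sub_distrib, ← Finset.sum_mul, hq1, one_mul, hu, hz]
    have hz0 : ∫ x, (u x - z x) ∂ν = 0 := by
      rw [← hzero]
      exact integral_congr_ae (ae_of_all _ fun x => (hsplit x).symm)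
    rw [integral_sub huint hzint] at hz0
    have hLeq : ∀ x, Real.log ((∑ i, g (τ i x)) / g x) = w x - z x := fun x =>
      Real.log_div (hBpos x).ne' (hg x).ne'
    calc -∫ x, A x ∂ν ≤ ∫ x, w x ∂ν - ∫ x, u x ∂ν := by linarith
      _ = ∫ x, w x ∂ν - ∫ x, z x ∂ν := by linarith
      _ = ∫ x, (w x - z x) ∂ν := (integral_sub hwint hzint).symm
      _ = ∫ x, Real.log ((∑ i, g (τ i x)) / g x) ∂ν :=
          integral_congr_ae (ae_of_all _ fun x => (hLeq x).symm)
  haveI : Nonempty {g : C(X, ℝ) // ∀ x, 0 < g x} :=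
    ⟨⟨ContinuousMap.const X 1, fun _ => one_pos⟩⟩
  refine ⟨by linarith, le_ciInf key, ?_⟩
  have hbdd : BddBelow (Set.range fun g : {g : C(X, ℝ) // ∀ x, 0 < g x} =>
      ∫ x, Real.log ((∑ i, g.1 (τ i x)) / g.1 x) ∂ν) :=
    ⟨-∫ x, A x ∂ν, by rintro _ ⟨g, rfl⟩; exact key g⟩
  have h1 := ciInf_le hbdd ⟨ContinuousMap.const X 1, fun _ => one_pos⟩
  refine h1.trans ?_
  have : ∀ x : X, Real.log ((∑ _i : Fin n, (1:ℝ)) / 1) = Real.log n := by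
    intro x; simp
  simp only [ContinuousMap.const_apply]
  rw [show (fun x : X => Real.log ((∑ _i : Fin n, (1:ℝ)) / 1)) = fun _ => Real.log n from
    funext this]
  rw [integral_const]
  simp
end

section
/- With notation as above, suppose there exists an optimal function g* ∈ C(X,ℝ), g* > 0, meaning q_i(x) = g*(τ_i(x))/B₁(g*)(x) for all i and x. Then the average and variational entropies coincide: h_a(μ̂) = h_v(μ̂) = ∫_X ln(B₁(g*)/g*) dν. -/
open MeasureTheory

lemma contAux {X : Type*} [TopologicalSpace X] {n : ℕ} (τ : Fin n → X → X)
    (hτ : ∀ i, Continuous (τ i)) : Continuous fun p : X × Fin n => τ p.2 p.1 := by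
  rw [continuous_iff_continuousAt]
  rintro ⟨x, i⟩
  have hmem : {p : X × Fin n | p.2 = i} ∈ nhds (x, i) :=
    (((isOpen_discrete {i}).preimage continuous_snd)).mem_nhds rfl
  exact ((hτ i).comp continuous_fst).continuousAt.congr
    (Filter.eventuallyEq_of_mem hmem (fun p hp => by
      rw [Set.mem_setOf_eq] at hp; rw [hp]; rfl))

/-- If there is an optimal function `g*` (i.e. `q_i(x) = g*(τ_i(x))/B₁(g*)(x)`),
then the average and variational entropies coincide and equal
`∫ ln(B₁(g*)/g*) dν`. -/
theorem stmt12 {X : Type*} [MetricSpace X] [CompactSpace X]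
    [MeasurableSpace X] [BorelSpace X]
    {n : ℕ} (hn : 0 < n)
    (τ : Fin n → X → X) (hτ : ∀ i, Continuous (τ i))
    (μh : Measure (X × Fin n)) [IsProbabilityMeasure μh]
    (hol : ∀ f : C(X, ℝ), ∫ p, (f (τ p.2 p.1) - f p.1) ∂μh = 0)
    (q : Fin n → X → ℝ) (hqm : ∀ i, Measurable (q i))
    (hq0 : ∀ i x, 0 ≤ q i x) (hq1 : ∀ x, ∑ i, q i x = 1)
    (ν : Measure X) (hν : ν = μh.map Prod.fst)
    (hdis : ∀ F : C(X × Fin n, ℝ),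
      ∫ p, F p ∂μh = ∫ x, ∑ i, q i x * F (x, i) ∂ν)
    (gs : C(X, ℝ)) (hgs : ∀ x, 0 < gs x)
    (hopt : ∀ i x, q i x = gs (τ i x) / ∑ j, gs (τ j x)) :
    (-∫ x, ∑ i, q i x * Real.log (q i x) ∂ν) =
        (⨅ g : {g : C(X, ℝ) // ∀ x, 0 < g x},
          ∫ x, Real.log ((∑ i, g.1 (τ i x)) / g.1 x) ∂ν) ∧
      (-∫ x, ∑ i, q i x * Real.log (q i x) ∂ν) =
        ∫ x, Real.log ((∑ i, gs (τ i x)) / gs x) ∂ν := by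
  haveI : IsProbabilityMeasure ν := by
    rw [hν]; exact Measure.isProbabilityMeasure_map measurable_fst.aemeasurable
  -- integrability of continuous functions
  have integν : ∀ {f : X → ℝ}, Continuous f → Integrable f ν := fun hf =>
    integrableOn_univ.mp (hf.continuousOn.integrableOn_compact isCompact_univ)
  have integμh : ∀ {f : X × Fin n → ℝ}, Continuous f → Integrable f μh := fun hf =>
    integrableOn_univ.mp (hf.continuousOn.integrableOn_compact isCompact_univ)
  -- the key transfer lemma: ∫ ∑ qᵢ f(τᵢ x) dν = ∫ f dν for continuous f
  have key : ∀ f : C(X, ℝ), ∫ x, ∑ i, q i x * f (τ i x) ∂ν = ∫ x, f x ∂ν := by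
    intro f
    have hcτ : Continuous fun p : X × Fin n => f (τ p.2 p.1) :=
      f.continuous.comp (contAux τ hτ)
    have h1 := hdis ⟨fun p => f (τ p.2 p.1), hcτ⟩
    have h2 := hdis ⟨fun p => f p.1, f.continuous.comp continuous_fst⟩
    simp only [ContinuousMap.coe_mk] at h1 h2
    have h3 : ∫ x, ∑ i, q i x * f x ∂ν = ∫ x, f x ∂ν := by
      apply integral_congr_ae
      filter_upwards with x
      rw [← Finset.sum_mul, hq1 x, one_mul]
    have h4 : ∫ p : X × Fin n, f (τ p.2 p.1) ∂μh = ∫ p : X × Fin n, f p.1 ∂μh := by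
      have i1 : Integrable (fun p : X × Fin n => f (τ p.2 p.1)) μh := integμh hcτ
      have i2 : Integrable (fun p : X × Fin n => f p.1) μh :=
        integμh (f.continuous.comp continuous_fst)
      have := hol f
      rwa [integral_sub i1 i2, sub_eq_zero] at this
    rw [← h1, h4, h2, h3]
  -- positivity and continuity of B := ∑ gs ∘ τᵢ
  set B : X → ℝ := fun x => ∑ i, gs (τ i x) with hBdef
  have hBc : Continuous B := continuous_finset_sum _ fun i _ => gs.continuous.comp (hτ i)
  have hBpos : ∀ x, 0 < B x := fun x =>
    Finset.sum_pos (fun i _ => hgs (τ i x)) (by simp [Finset.univ_nonempty_iff, Fin.pos_iff_nonempty.mp hn])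
  have hqpos : ∀ i x, 0 < q i x := fun i x => by
    rw [hopt i x]; exact div_pos (hgs _) (hBpos x)
  have hqcont : ∀ i, Continuous (q i) := fun i => by
    have : (q i) = fun x => gs (τ i x) / B x := funext fun x => hopt i x
    rw [this]
    exact (gs.continuous.comp (hτ i)).div hBc fun x => (hBpos x).ne'
  -- second equality
  have hlog : Continuous fun x => Real.log (gs x) :=
    gs.continuous.log fun x => (hgs x).ne'
  have hcore : ∀ (g : C(X, ℝ)) (hg : ∀ x, 0 < g x),
      Continuous fun x => ∑ i, q i x * Real.log (g (τ i x)) := fun g hg =>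
    continuous_finset_sum _ fun i _ => (hqcont i).mul
      ((g.continuous.comp (hτ i)).log fun x => (hg (τ i x)).ne')
  have second : (-∫ x, ∑ i, q i x * Real.log (q i x) ∂ν) =
      ∫ x, Real.log ((∑ i, gs (τ i x)) / gs x) ∂ν := by
    have hpt : ∀ x, ∑ i, q i x * Real.log (q i x) =
        (∑ i, q i x * Real.log (gs (τ i x))) - Real.log (B x) := by
      intro x
      have : ∀ i, q i x * Real.log (q i x) =
          q i x * Real.log (gs (τ i x)) - q i x * Real.log (B x) := by
        intro i
        rw [hopt i x, Real.log_div (hgs _).ne' (hBpos x).ne', mul_sub]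
      rw [Finset.sum_congr rfl fun i _ => this i, Finset.sum_sub_distrib,
        ← Finset.sum_mul, hq1 x, one_mul]
    have hqlogc : Continuous fun x => ∑ i, q i x * Real.log (q i x) := by
      have : (fun x => ∑ i, q i x * Real.log (q i x)) =
          fun x => (∑ i, q i x * Real.log (gs (τ i x))) - Real.log (B x) :=
        funext hpt
      rw [this]
      exact (hcore gs hgs).sub (hBc.log fun x => (hBpos x).ne')
    calc (-∫ x, ∑ i, q i x * Real.log (q i x) ∂ν)
        = -∫ x, (∑ i, q i x * Real.log (gs (τ i x))) - Real.log (B x) ∂ν := by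
          rw [integral_congr_ae (Filter.Eventually.of_forall hpt)]
      _ = -((∫ x, ∑ i, q i x * Real.log (gs (τ i x)) ∂ν) - ∫ x, Real.log (B x) ∂ν) := by
          rw [integral_sub (integν (hcore gs hgs)) (integν (hBc.log fun x => (hBpos x).ne'))]
      _ = (∫ x, Real.log (B x) ∂ν) - ∫ x, Real.log (gs x) ∂ν := by
          have k1 := key ⟨fun x => Real.log (gs x), hlog⟩
          simp only [ContinuousMap.coe_mk] at k1
          rw [k1]; ring
      _ = ∫ x, Real.log (B x) - Real.log (gs x) ∂ν := by
          rw [integral_sub (integν (hBc.log fun x => (hBpos x).ne')) (integν hlog)]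
      _ = ∫ x, Real.log ((∑ i, gs (τ i x)) / gs x) ∂ν := by
          apply integral_congr_ae
          filter_upwards with x
          rw [Real.log_div (hBpos x).ne' (hgs x).ne']
  -- lower bound: for every positive g, h_a ≤ ∫ log (Bg/g)
  have lb : ∀ g : {g : C(X, ℝ) // ∀ x, 0 < g x},
      (-∫ x, ∑ i, q i x * Real.log (q i x) ∂ν) ≤
        ∫ x, Real.log ((∑ i, g.1 (τ i x)) / g.1 x) ∂ν := by
    rintro ⟨g, hg⟩
    set Bg : X → ℝ := fun x => ∑ i, g (τ i x) with hBgdef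
    have hBgc : Continuous Bg := continuous_finset_sum _ fun i _ => g.continuous.comp (hτ i)
    have hBgpos : ∀ x, 0 < Bg x := fun x =>
      Finset.sum_pos (fun i _ => hg (τ i x)) (by simp [Finset.univ_nonempty_iff, Fin.pos_iff_nonempty.mp hn])
    -- pointwise Gibbs inequality
    have gibbs : ∀ x, (∑ i, q i x * Real.log (g (τ i x))) - Real.log (Bg x) ≤
        ∑ i, q i x * Real.log (q i x) := by
      intro x
      have h1 : ∀ i, q i x * (Real.log (g (τ i x) / Bg x) - Real.log (q i x)) ≤
          g (τ i x) / Bg x - q i x := by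
        intro i
        have hp : 0 < g (τ i x) / Bg x := div_pos (hg _) (hBgpos x)
        have := Real.log_le_sub_one_of_pos (div_pos hp (hqpos i x))
        rw [Real.log_div hp.ne' (hqpos i x).ne'] at this
        calc q i x * (Real.log (g (τ i x) / Bg x) - Real.log (q i x))
            ≤ q i x * (g (τ i x) / Bg x / q i x - 1) :=
              mul_le_mul_of_nonneg_left this (hq0 i x)
          _ = g (τ i x) / Bg x - q i x := by
              have hq' : q i x ≠ 0 := (hqpos i x).ne'
              have hB' : Bg x ≠ 0 := (hBgpos x).ne'
              field_simp
      have h2 : ∑ i, q i x * (Real.log (g (τ i x) / Bg x) - Real.log (q i x)) ≤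
          ∑ i, (g (τ i x) / Bg x - q i x) :=
        Finset.sum_le_sum fun i _ => h1 i
      have h3 : ∑ i, (g (τ i x) / Bg x - q i x) = 0 := by
        rw [Finset.sum_sub_distrib, ← Finset.sum_div, hq1 x]
        have hB : (∑ i, g (τ i x)) = Bg x := rfl
        rw [hB, div_self (hBgpos x).ne', sub_self]
      have h4 : ∑ i, q i x * (Real.log (g (τ i x) / Bg x) - Real.log (q i x)) =
          ((∑ i, q i x * Real.log (g (τ i x))) - Real.log (Bg x)) -
            ∑ i, q i x * Real.log (q i x) := by
        have : ∀ i, q i x * (Real.log (g (τ i x) / Bg x) - Real.log (q i x)) =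
            (q i x * Real.log (g (τ i x)) - q i x * Real.log (Bg x)) -
              q i x * Real.log (q i x) := by
          intro i
          rw [Real.log_div (hg _).ne' (hBgpos x).ne']
          ring
        rw [Finset.sum_congr rfl fun i _ => this i, Finset.sum_sub_distrib,
          Finset.sum_sub_distrib, ← Finset.sum_mul, hq1 x, one_mul]
      rw [h4, h3] at h2
      linarith
    -- integrate
    have hLc : Continuous fun x => (∑ i, q i x * Real.log (g (τ i x))) - Real.log (Bg x) :=
      (hcore g hg).sub (hBgc.log fun x => (hBgpos x).ne')
    have hqlogc : Continuous fun x => ∑ i, q i x * Real.log (q i x) := by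
      have : (fun x => ∑ i, q i x * Real.log (q i x)) =
          fun x => (∑ i, q i x * Real.log (gs (τ i x))) - Real.log (B x) := by
        funext x
        have : ∀ i, q i x * Real.log (q i x) =
            q i x * Real.log (gs (τ i x)) - q i x * Real.log (B x) := by
          intro i
          rw [hopt i x, Real.log_div (hgs _).ne' (hBpos x).ne', mul_sub]
        rw [Finset.sum_congr rfl fun i _ => this i, Finset.sum_sub_distrib,
          ← Finset.sum_mul, hq1 x, one_mul]
      rw [this]
      exact (hcore gs hgs).sub (hBc.log fun x => (hBpos x).ne')
    have hint : ∫ x, (∑ i, q i x * Real.log (g (τ i x))) - Real.log (Bg x) ∂ν ≤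
        ∫ x, ∑ i, q i x * Real.log (q i x) ∂ν :=
      integral_mono (integν hLc) (integν hqlogc) gibbs
    have heq : ∫ x, (∑ i, q i x * Real.log (g (τ i x))) - Real.log (Bg x) ∂ν =
        (∫ x, Real.log (g x) ∂ν) - ∫ x, Real.log (Bg x) ∂ν := by
      have k1 := key ⟨fun x => Real.log (g x), g.continuous.log fun x => (hg x).ne'⟩
      simp only [ContinuousMap.coe_mk] at k1
      rw [integral_sub (integν (hcore g hg)) (integν (hBgc.log fun x => (hBgpos x).ne')), k1]
    have hrhs : ∫ x, Real.log ((∑ i, g (τ i x)) / g x) ∂ν =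
        (∫ x, Real.log (Bg x) ∂ν) - ∫ x, Real.log (g x) ∂ν := by
      rw [← integral_sub (integν (hBgc.log fun x => (hBgpos x).ne'))
        (integν (g.continuous.log fun x => (hg x).ne'))]
      apply integral_congr_ae
      filter_upwards with x
      rw [Real.log_div (hBgpos x).ne' (hg x).ne']
    rw [heq] at hint
    rw [hrhs]
    linarith
  haveI : Nonempty {g : C(X, ℝ) // ∀ x, 0 < g x} := ⟨⟨gs, hgs⟩⟩
  refine ⟨le_antisymm (le_ciInf lb) ?_, second⟩
  have hbdd : BddBelow (Set.range fun g : {g : C(X, ℝ) // ∀ x, 0 < g x} =>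
      ∫ x, Real.log ((∑ i, g.1 (τ i x)) / g.1 x) ∂ν) := by
    refine ⟨-∫ x, ∑ i, q i x * Real.log (q i x) ∂ν, ?_⟩
    rintro y ⟨g, rfl⟩
    exact lb g
  calc (⨅ g : {g : C(X, ℝ) // ∀ x, 0 < g x},
        ∫ x, Real.log ((∑ i, g.1 (τ i x)) / g.1 x) ∂ν)
      ≤ ∫ x, Real.log ((∑ i, gs (τ i x)) / gs x) ∂ν := ciInf_le hbdd ⟨gs, hgs⟩
    _ = -∫ x, ∑ i, q i x * Real.log (q i x) ∂ν := second.symm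
end

section
/- Let ψ: X → (0,∞) be continuous and consider the IFSw with weights (ψ*τ)_i(x) = ψ(τ_i(x)). Then the topological pressure P(ψ) = sup over holonomic μ̂ of inf over positive continuous g of ∫_X ln(B_{ψ*τ}(g)/g) dν equals sup over holonomic μ̂ of [h_v(μ̂) + ∫_X ln ψ dν], where ν is the first marginal of μ̂. -/
open MeasureTheory Real Set

private lemma ciInf_comp_equiv {α β γ : Type*} [ConditionallyCompleteLattice γ]
    (e : α ≃ β) (f : β → γ) : ⨅ x, f (e x) = ⨅ y, f y := by
  unfold iInf
  congr 1
  exact e.surjective.range_comp f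

/-- The topological pressure of a positive continuous `ψ` (sup over holonomic
measures of the inf over positive continuous `g` of `∫ ln(B_{ψ*τ}(g)/g) dν`)
equals `sup_{μ̂ holonomic} [h_v(μ̂) + ∫ ln ψ dν]`. -/
theorem stmt13 {X : Type*} [MetricSpace X] [CompactSpace X]
    [MeasurableSpace X] [BorelSpace X]
    {n : ℕ} (hn : 0 < n)
    (τ : Fin n → X → X) (hτ : ∀ i, Continuous (τ i))
    (ψ : C(X, ℝ)) (hψ : ∀ x, 0 < ψ x) :
    (⨆ m : {m : Measure (X × Fin n) // IsProbabilityMeasure m ∧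
        ∀ f : C(X, ℝ), ∫ p : X × Fin n, (f (τ p.2 p.1) - f p.1) ∂m = 0},
      ⨅ g : {g : C(X, ℝ) // ∀ x, 0 < g x},
        ∫ x, Real.log ((∑ i, ψ (τ i x) * g.1 (τ i x)) / g.1 x)
          ∂((m.1 : MeasureTheory.Measure (X × Fin n)).map Prod.fst)) =
    (⨆ m : {m : Measure (X × Fin n) // IsProbabilityMeasure m ∧
        ∀ f : C(X, ℝ), ∫ p : X × Fin n, (f (τ p.2 p.1) - f p.1) ∂m = 0},
      (⨅ g : {g : C(X, ℝ) // ∀ x, 0 < g x},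
        ∫ x, Real.log ((∑ i, g.1 (τ i x)) / g.1 x) ∂((m.1 : MeasureTheory.Measure (X × Fin n)).map Prod.fst)) +
      ∫ x, Real.log (ψ x) ∂((m.1 : MeasureTheory.Measure (X × Fin n)).map Prod.fst)) := by
  refine iSup_congr fun M => ?_
  obtain ⟨m, hm, hhol⟩ := M
  set ν : Measure X := m.map Prod.fst with hν
  have hprob : IsProbabilityMeasure ν := Measure.isProbabilityMeasure_map measurable_fst.aemeasurable
  -- integrability of continuous functions
  have hintX : ∀ f : X → ℝ, Continuous f → Integrable f ν := fun f hf =>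
    hf.integrable_of_hasCompactSupport
      (IsCompact.of_isClosed_subset isCompact_univ (isClosed_tsupport f) (subset_univ _))
  have hintM : ∀ f : X × Fin n → ℝ, Continuous f → Integrable f m := fun f hf =>
    hf.integrable_of_hasCompactSupport
      (IsCompact.of_isClosed_subset isCompact_univ (isClosed_tsupport f) (subset_univ _))
  -- pushforward of integrals
  have hmap : ∀ f : X → ℝ, Continuous f → ∫ x, f x ∂ν = ∫ p : X × Fin n, f p.1 ∂m := fun f hf =>
    integral_map measurable_fst.aemeasurable hf.aestronglyMeasurable
  -- holonomy as equality of integrals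
  have hholeq : ∀ f : X → ℝ, Continuous f →
      ∫ p : X × Fin n, f (τ p.2 p.1) ∂m = ∫ p : X × Fin n, f p.1 ∂m := by
    intro f hf
    have h1 : Integrable (fun p : X × Fin n => f (τ p.2 p.1)) m :=
      hintM _ (continuous_prod_of_discrete_right.mpr fun i => hf.comp (hτ i))
    have h2 : Integrable (fun p : X × Fin n => f p.1) m := hintM _ (hf.comp continuous_fst)
    have := hhol ⟨f, hf⟩
    simp only [ContinuousMap.coe_mk] at this
    rw [integral_sub h1 h2] at this
    linarith
  -- continuity facts for a positive continuous g
  have hlogc : ∀ g : {g : C(X, ℝ) // ∀ x, 0 < g x}, Continuous fun x => Real.log (g.1 x) :=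
    fun g => g.1.continuous.log fun x => (g.2 x).ne'
  have hBpos : ∀ g : {g : C(X, ℝ) // ∀ x, 0 < g x}, ∀ x, 0 < ∑ i, g.1 (τ i x) := by
    intro g x
    exact Finset.sum_pos (fun i _ => g.2 _) (by simpa using Finset.univ_nonempty_iff.mpr ⟨⟨0, hn⟩⟩)
  have hBc : ∀ g : {g : C(X, ℝ) // ∀ x, 0 < g x}, Continuous fun x => ∑ i, g.1 (τ i x) :=
    fun g => continuous_finset_sum _ fun i _ => g.1.continuous.comp (hτ i)
  have hlogτ : ∀ g : {g : C(X, ℝ) // ∀ x, 0 < g x},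
      Continuous fun p : X × Fin n => Real.log (g.1 (τ p.2 p.1)) := fun g =>
    continuous_prod_of_discrete_right.mpr fun i => by exact (hlogc g).comp (hτ i)
  have hlog1 : ∀ g : {g : C(X, ℝ) // ∀ x, 0 < g x},
      Continuous fun p : X × Fin n => Real.log (g.1 p.1) := fun g => by
    exact (hlogc g).comp continuous_fst
  -- F₂ is nonnegative (uses holonomy)
  have hF2 : ∀ g : {g : C(X, ℝ) // ∀ x, 0 < g x},
      0 ≤ ∫ x, Real.log ((∑ i, g.1 (τ i x)) / g.1 x) ∂ν := by
    intro g
    have hc : Continuous fun x => Real.log ((∑ i, g.1 (τ i x)) / g.1 x) :=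
      ((hBc g).div g.1.continuous fun x => (g.2 x).ne').log
        fun x => (div_pos (hBpos g x) (g.2 x)).ne'
    rw [hmap _ hc]
    have key : ∫ p : X × Fin n, Real.log (g.1 (τ p.2 p.1)) - Real.log (g.1 p.1) ∂m = 0 := by
      rw [integral_sub (hintM _ (hlogτ g)) (hintM _ (hlog1 g))]
      rw [hholeq _ (hlogc g)]
      ring
    calc (0:ℝ) = ∫ p : X × Fin n, Real.log (g.1 (τ p.2 p.1)) - Real.log (g.1 p.1) ∂m :=
          key.symm
      _ ≤ ∫ p : X × Fin n, Real.log ((∑ i, g.1 (τ i p.1)) / g.1 p.1) ∂m := by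
          refine integral_mono ?_ (hintM _ (hc.comp continuous_fst)) fun p => ?_
          · exact Integrable.sub (hintM _ (hlogτ g)) (hintM _ (hlog1 g))
          · rw [Real.log_div (hBpos g p.1).ne' (g.2 p.1).ne']
            have : g.1 (τ p.2 p.1) ≤ ∑ i, g.1 (τ i p.1) :=
              Finset.single_le_sum (f := fun i => g.1 (τ i p.1)) (fun i _ => (g.2 _).le)
                (Finset.mem_univ p.2)
            have := Real.log_le_log (g.2 (τ p.2 p.1)) this
            linarith
  -- the substitution equivalence g ↦ ψ * g
  have hψinv : Continuous fun x => (ψ x)⁻¹ := ψ.continuous.inv₀ fun x => (hψ x).ne'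
  let e : {g : C(X, ℝ) // ∀ x, 0 < g x} ≃ {g : C(X, ℝ) // ∀ x, 0 < g x} :=
    { toFun := fun g => ⟨ψ * g.1, fun x => mul_pos (hψ x) (g.2 x)⟩
      invFun := fun g => ⟨⟨fun x => (ψ x)⁻¹, hψinv⟩ * g.1,
        fun x => mul_pos (inv_pos.2 (hψ x)) (g.2 x)⟩
      left_inv := fun g => by
        ext x
        simp [inv_mul_cancel_left₀ (hψ x).ne']
      right_inv := fun g => by
        ext x
        simp [mul_inv_cancel_left₀ (hψ x).ne'] }
  have hne : Nonempty {g : C(X, ℝ) // ∀ x, 0 < g x} := ⟨⟨1, fun x => one_pos⟩⟩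
  have hlogψ : Integrable (fun x => Real.log (ψ x)) ν :=
    hintX _ (ψ.continuous.log fun x => (hψ x).ne')
  -- key pointwise/integral identity
  have hkey : ∀ g : {g : C(X, ℝ) // ∀ x, 0 < g x},
      ∫ x, Real.log ((∑ i, ψ (τ i x) * g.1 (τ i x)) / g.1 x) ∂ν =
      (∫ x, Real.log ((∑ i, (e g).1 (τ i x)) / (e g).1 x) ∂ν) +
        ∫ x, Real.log (ψ x) ∂ν := by
    intro g
    rw [← integral_add]
    · refine integral_congr_ae (Filter.Eventually.of_forall fun x => ?_)
      beta_reduce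
      have hA : 0 < ∑ i, ψ (τ i x) * g.1 (τ i x) := by
        refine Finset.sum_pos (fun i _ => mul_pos (hψ _) (g.2 _)) ?_
        simpa using Finset.univ_nonempty_iff.mpr ⟨⟨0, hn⟩⟩
      have hBe : (∑ i, (e g).1 (τ i x)) = ∑ i, ψ (τ i x) * g.1 (τ i x) := by
        simp [e]
      have hge : (e g).1 x = ψ x * g.1 x := by simp [e]
      rw [hBe, hge, Real.log_div hA.ne' (g.2 x).ne',
        Real.log_div hA.ne' (mul_pos (hψ x) (g.2 x)).ne',
        Real.log_mul (hψ x).ne' (g.2 x).ne']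
      ring
    · refine hintX _ ?_
      have hc : Continuous fun x => ∑ i, (e g).1 (τ i x) :=
        continuous_finset_sum _ fun i _ => (e g).1.continuous.comp (hτ i)
      exact (hc.div (e g).1.continuous fun x => ((e g).2 x).ne').log
        fun x => (div_pos (hBpos (e g) x) ((e g).2 x)).ne'
    · exact hlogψ
  calc ⨅ g : {g : C(X, ℝ) // ∀ x, 0 < g x},
        ∫ x, Real.log ((∑ i, ψ (τ i x) * g.1 (τ i x)) / g.1 x) ∂ν
      = ⨅ g : {g : C(X, ℝ) // ∀ x, 0 < g x},
        ((∫ x, Real.log ((∑ i, (e g).1 (τ i x)) / (e g).1 x) ∂ν) +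
          ∫ x, Real.log (ψ x) ∂ν) := by
        exact iInf_congr hkey
    _ = (⨅ g : {g : C(X, ℝ) // ∀ x, 0 < g x},
          ∫ x, Real.log ((∑ i, (e g).1 (τ i x)) / (e g).1 x) ∂ν) +
          ∫ x, Real.log (ψ x) ∂ν := by
        refine (ciInf_add ?_ _).symm
        exact ⟨0, fun r hr => by obtain ⟨g, rfl⟩ := hr; exact hF2 (e g)⟩
    _ = (⨅ g : {g : C(X, ℝ) // ∀ x, 0 < g x},
          ∫ x, Real.log ((∑ i, g.1 (τ i x)) / g.1 x) ∂ν) +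
          ∫ x, Real.log (ψ x) ∂ν := by
        congr 1
        exact ciInf_comp_equiv e fun g : {g : C(X, ℝ) // ∀ x, 0 < g x} =>
          ∫ x, Real.log ((∑ i, g.1 (τ i x)) / g.1 x) ∂ν
end

section
/- Let p(φ) = P(exp φ) be the pressure functional on C(X,ℝ) and suppose p is Gâteaux differentiable at φ = ln ψ for a positive continuous ψ. Then all equilibrium states for ψ have the same first marginal: if μ̂₁, μ̂₂ are equilibrium states for ψ, then T_*μ̂₁ = T_*μ̂₂. -/
open MeasureTheory Filter Topology

/-- If the pressure functional `p(φ) = P(exp φ)` is Gâteaux differentiable at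
`φ₀ = ln ψ`, then all equilibrium states for `ψ` have the same first marginal. -/
theorem stmt17 {X : Type*} [MetricSpace X] [CompactSpace X]
    [MeasurableSpace X] [BorelSpace X]
    {n : ℕ} (hn : 0 < n)
    (τ : Fin n → X → X) (hτ : ∀ i, Continuous (τ i))
    (ψ : C(X, ℝ)) (hψ : ∀ x, 0 < ψ x)
    (p : C(X, ℝ) → ℝ)
    (hp : ∀ φ : C(X, ℝ), p φ =
      ⨆ m : {m : Measure (X × Fin n) // IsProbabilityMeasure m ∧
          ∀ f : C(X, ℝ), ∫ q : X × Fin n, (f (τ q.2 q.1) - f q.1) ∂m = 0},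
        ((⨅ g : {g : C(X, ℝ) // ∀ x, 0 < g x},
            ∫ x, Real.log ((∑ i, g.1 (τ i x)) / g.1 x)
              ∂((m.1 : Measure (X × Fin n)).map Prod.fst)) +
          ∫ x, φ x ∂((m.1 : Measure (X × Fin n)).map Prod.fst)))
    (φ₀ : C(X, ℝ)) (hφ₀ : ∀ x, φ₀ x = Real.log (ψ x))
    (D : C(X, ℝ) →ₗ[ℝ] ℝ)
    (hD : ∀ η : C(X, ℝ),
      Tendsto (fun t : ℝ => (p (φ₀ + t • η) - p φ₀) / t) (𝓝[≠] (0 : ℝ))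
        (𝓝 (D η)))
    (m₁ m₂ : Measure (X × Fin n))
    (hm₁p : IsProbabilityMeasure m₁) (hm₂p : IsProbabilityMeasure m₂)
    (hm₁h : ∀ f : C(X, ℝ), ∫ q : X × Fin n, (f (τ q.2 q.1) - f q.1) ∂m₁ = 0)
    (hm₂h : ∀ f : C(X, ℝ), ∫ q : X × Fin n, (f (τ q.2 q.1) - f q.1) ∂m₂ = 0)
    (heq₁ : (⨅ g : {g : C(X, ℝ) // ∀ x, 0 < g x},
        ∫ x, Real.log ((∑ i, g.1 (τ i x)) / g.1 x) ∂(m₁.map Prod.fst)) +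
      ∫ x, Real.log (ψ x) ∂(m₁.map Prod.fst) = p φ₀)
    (heq₂ : (⨅ g : {g : C(X, ℝ) // ∀ x, 0 < g x},
        ∫ x, Real.log ((∑ i, g.1 (τ i x)) / g.1 x) ∂(m₂.map Prod.fst)) +
      ∫ x, Real.log (ψ x) ∂(m₂.map Prod.fst) = p φ₀) :
    m₁.map Prod.fst = m₂.map Prod.fst := by
  -- integrability of continuous functions w.r.t. a finite measure on a compact space
  have integ : ∀ (f : C(X, ℝ)) (ν : Measure X), IsProbabilityMeasure ν →
      Integrable (fun x => f x) ν := by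
    intro f ν hν
    exact (BoundedContinuousFunction.mkOfCompact f).integrable ν
  -- the inner infimum is always at most `log n`
  have hinf_le : ∀ ν : Measure X, IsProbabilityMeasure ν →
      (⨅ g : {g : C(X, ℝ) // ∀ x, 0 < g x},
        ∫ x, Real.log ((∑ i, g.1 (τ i x)) / g.1 x) ∂ν) ≤ Real.log n := by
    intro ν hν
    have hlogn : (0 : ℝ) ≤ Real.log n := by
      apply Real.log_nonneg
      exact_mod_cast hn
    by_cases hb : BddBelow (Set.range fun g : {g : C(X, ℝ) // ∀ x, 0 < g x} =>
        ∫ x, Real.log ((∑ i, g.1 (τ i x)) / g.1 x) ∂ν)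
    · refine le_trans (ciInf_le hb ⟨1, fun x => one_pos⟩) (le_of_eq ?_)
      have h1 : (fun x : X => Real.log ((∑ _i : Fin n, (1 : ℝ)) / (1 : ℝ)))
          = fun _ : X => Real.log n := by
        funext x
        simp
      simp only [ContinuousMap.one_apply, h1]
      simp [integral_const]
    · rw [Real.iInf_of_not_bddBelow hb]
      exact hlogn
  -- key estimate: the value of `p` on perturbations, via an equilibrium state
  have key : ∀ (m : Measure (X × Fin n)), IsProbabilityMeasure m →
      (∀ f : C(X, ℝ), ∫ q : X × Fin n, (f (τ q.2 q.1) - f q.1) ∂m = 0) →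
      ((⨅ g : {g : C(X, ℝ) // ∀ x, 0 < g x},
          ∫ x, Real.log ((∑ i, g.1 (τ i x)) / g.1 x) ∂(m.map Prod.fst)) +
        ∫ x, Real.log (ψ x) ∂(m.map Prod.fst) = p φ₀) →
      ∀ η : C(X, ℝ), (D η : ℝ) = ∫ x, η x ∂(m.map Prod.fst) := by
    intro m hmp hmh heq η
    set μ : Measure X := m.map Prod.fst with hμ
    haveI hμp : IsProbabilityMeasure μ := Measure.isProbabilityMeasure_map
      (measurable_fst.aemeasurable)
    set c : ℝ := ∫ x, η x ∂μ with hc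
    -- the basic subdifferential inequality
    have main : ∀ t : ℝ, p φ₀ + t * c ≤ p (φ₀ + t • η) := by
      intro t
      rw [hp (φ₀ + t • η)]
      set φ : C(X, ℝ) := φ₀ + t • η with hφdef
      set F : {m : Measure (X × Fin n) // IsProbabilityMeasure m ∧
          ∀ f : C(X, ℝ), ∫ q : X × Fin n, (f (τ q.2 q.1) - f q.1) ∂m = 0} → ℝ :=
        fun mm =>
          (⨅ g : {g : C(X, ℝ) // ∀ x, 0 < g x},
            ∫ x, Real.log ((∑ i, g.1 (τ i x)) / g.1 x)
              ∂((mm.1 : Measure (X × Fin n)).map Prod.fst)) +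
          ∫ x, φ x ∂((mm.1 : Measure (X × Fin n)).map Prod.fst) with hF
      have hbdd : BddAbove (Set.range F) := by
        refine ⟨Real.log n + ‖φ‖, ?_⟩
        rintro _ ⟨mm, rfl⟩
        haveI : IsProbabilityMeasure ((mm.1 : Measure (X × Fin n)).map Prod.fst) :=
          have := mm.2.1
          Measure.isProbabilityMeasure_map (measurable_fst.aemeasurable)
        refine add_le_add (hinf_le _ this) ?_
        calc ∫ x, φ x ∂((mm.1 : Measure (X × Fin n)).map Prod.fst)
            ≤ ∫ _x, ‖φ‖ ∂((mm.1 : Measure (X × Fin n)).map Prod.fst) := by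
              refine integral_mono (integ φ _ this) (integrable_const _) ?_
              intro x
              exact (abs_le.mp (φ.norm_coe_le_norm x)).2
          _ = ‖φ‖ := by simp
      have hle := le_ciSup hbdd (⟨m, hmp, hmh⟩ : {m : Measure (X × Fin n) //
        IsProbabilityMeasure m ∧
          ∀ f : C(X, ℝ), ∫ q : X × Fin n, (f (τ q.2 q.1) - f q.1) ∂m = 0})
      refine le_trans (le_of_eq ?_) hle
      have hφeq : ∀ x : X, φ x = φ₀ x + t * η x := by
        intro x
        simp [hφdef]
      have hint : ∫ x, φ x ∂μ = (∫ x, Real.log (ψ x) ∂μ) + t * c := by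
        rw [show (fun x => φ x) = fun x => φ₀ x + t * η x from funext hφeq]
        rw [integral_add (integ φ₀ μ hμp) ((integ η μ hμp).const_mul t)]
        rw [integral_const_mul]
        congr 1
        exact integral_congr_ae (Eventually.of_forall fun x => hφ₀ x)
      show p φ₀ + t * c = _ + ∫ x, φ x ∂μ
      rw [hint, ← heq]
      ring
    -- conclude `D η = c` from the two one-sided limits
    have hpos : ∀ t : ℝ, 0 < t → c ≤ (p (φ₀ + t • η) - p φ₀) / t := by
      intro t ht
      rw [le_div_iff₀ ht]
      have := main t
      nlinarith [main t]
    have hneg : ∀ t : ℝ, t < 0 → (p (φ₀ + t • η) - p φ₀) / t ≤ c := by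
      intro t ht
      rw [div_le_iff_of_neg ht]
      nlinarith [main t]
    have htendsto_pos : Tendsto (fun t : ℝ => (p (φ₀ + t • η) - p φ₀) / t)
        (𝓝[>] (0 : ℝ)) (𝓝 (D η)) :=
      (hD η).mono_left (nhdsWithin_mono _ fun t ht => ne_of_gt ht)
    have htendsto_neg : Tendsto (fun t : ℝ => (p (φ₀ + t • η) - p φ₀) / t)
        (𝓝[<] (0 : ℝ)) (𝓝 (D η)) :=
      (hD η).mono_left (nhdsWithin_mono _ fun t ht => ne_of_lt ht)
    have h1 : c ≤ D η :=
      ge_of_tendsto htendsto_pos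
        (eventually_nhdsWithin_of_forall fun t ht => hpos t ht)
    have h2 : (D η : ℝ) ≤ c :=
      le_of_tendsto htendsto_neg
        (eventually_nhdsWithin_of_forall fun t ht => hneg t ht)
    exact le_antisymm h2 h1
  -- all continuous functions integrate equally against both marginals
  have hsame : ∀ η : C(X, ℝ),
      ∫ x, η x ∂(m₁.map Prod.fst) = ∫ x, η x ∂(m₂.map Prod.fst) := by
    intro η
    rw [← key m₁ hm₁p hm₁h heq₁ η, ← key m₂ hm₂p hm₂h heq₂ η]
  haveI hμ₁ : IsProbabilityMeasure (m₁.map Prod.fst) :=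
    Measure.isProbabilityMeasure_map (measurable_fst.aemeasurable)
  haveI hμ₂ : IsProbabilityMeasure (m₂.map Prod.fst) :=
    Measure.isProbabilityMeasure_map (measurable_fst.aemeasurable)
  apply ext_of_forall_lintegral_eq_of_IsFiniteMeasure
  intro f
  have hf : Continuous fun x => ((f x : ℝ)) := NNReal.continuous_coe.comp f.continuous
  set g : C(X, ℝ) := ⟨fun x => (f x : ℝ), hf⟩ with hg
  have hint1 : Integrable (fun x => ((f x : ℝ))) (m₁.map Prod.fst) :=
    (BoundedContinuousFunction.mkOfCompact g).integrable _
  have hint2 : Integrable (fun x => ((f x : ℝ))) (m₂.map Prod.fst) :=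
    (BoundedContinuousFunction.mkOfCompact g).integrable _
  rw [lintegral_coe_eq_integral _ hint1, lintegral_coe_eq_integral _ hint2]
  congr 1
  exact hsame g
end

section
/- Let ψ: X → (0,∞) be continuous and suppose the transfer operator B_{ψ*τ} (with weights ψ∘τ_i) admits a strictly positive continuous eigenfunction h with eigenvalue ρ(B_{ψ*τ}), the spectral radius. Let p_j = (ψ∘τ_j)·(h∘τ_j)/(ρ·h) be the normalized weights and μ a fixed probability of the normalized Markov operator L_p, with holonomic lifting μ̂ given by dμ̂(x,i) = p_i(x) dμ(x). Then μ̂ is an equilibrium state for ψ and P(ψ) = ln ρ(B_{ψ*τ}) = lim_{N→∞} (1/N) ln B_{ψ*τ}^N(1)(x), the limit being uniform in x ∈ X. -/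
open MeasureTheory Filter

private lemma contIntegrableAux {Y : Type*} [TopologicalSpace Y] [CompactSpace Y]
    [MeasurableSpace Y] [OpensMeasurableSpace Y] {ν : Measure Y} [IsFiniteMeasure ν]
    {f : Y → ℝ} (hf : Continuous f) : Integrable f ν :=
  hf.integrable_of_hasCompactSupport ((isClosed_tsupport f).isCompact)

private lemma contDiscreteSnd {X : Type*} [TopologicalSpace X] {n : ℕ}
    {f : X × Fin n → ℝ} (hf : ∀ i, Continuous fun x => f (x, i)) : Continuous f := by
  rw [continuous_iff_continuousAt]
  rintro ⟨x, i⟩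
  have hmem : {q : X × Fin n | q.2 = i} ∈ nhds (x, i) :=
    IsOpen.mem_nhds ((isOpen_discrete {i}).preimage continuous_snd) rfl
  have hev : (fun q : X × Fin n => f (q.1, i)) =ᶠ[nhds (x, i)] f := by
    filter_upwards [hmem] with q hq
    rw [show (q.1, i) = q from Prod.ext rfl hq.symm]
  exact ContinuousAt.congr (((hf i).comp continuous_fst).continuousAt) hev

private lemma gibbsIneq {n : ℕ} (w a : Fin n → ℝ) (hw : ∀ i, 0 < w i)
    (hsum : ∑ i, w i = 1) (ha : ∀ i, 0 < a i) :
    ∑ i, w i * Real.log (a i / w i) ≤ Real.log (∑ i, a i) := by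
  have H := (strictConcaveOn_log_Ioi.concaveOn).le_map_sum
    (t := Finset.univ) (w := w) (p := fun i => a i / w i)
    (fun i _ => (hw i).le) hsum (fun i _ => Set.mem_Ioi.2 (div_pos (ha i) (hw i)))
  have he : ∀ i, w i • (a i / w i) = a i := fun i => by
    rw [smul_eq_mul, mul_div_cancel₀ _ (hw i).ne']
  simp only [smul_eq_mul] at H
  calc ∑ i, w i * Real.log (a i / w i) ≤ Real.log (∑ i, w i • (a i / w i)) := H
    _ = Real.log (∑ i, a i) := by rw [Finset.sum_congr rfl fun i _ => he i]

private lemma rpowLimAux (ρ : ℝ) (hρ : 0 < ρ) (K : ℝ) (hK : 0 < K) :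
    Tendsto (fun N : ℕ => (ρ^N * K) ^ ((N:ℝ)⁻¹)) atTop (nhds ρ) := by
  have h2 : Tendsto (fun N : ℕ => ρ * Real.exp (Real.log K * (N:ℝ)⁻¹)) atTop (nhds ρ) := by
    have h0 : Tendsto (fun N : ℕ => Real.log K * (N:ℝ)⁻¹) atTop (nhds 0) := by
      simpa using tendsto_inv_atTop_nhds_zero_nat.const_mul (Real.log K)
    have h1 := (Real.continuous_exp.tendsto 0).comp h0
    simpa using h1.const_mul ρ
  apply h2.congr'
  filter_upwards [eventually_ge_atTop 1] with N hN
  have hN0 : (N:ℝ) ≠ 0 := Nat.cast_ne_zero.2 (by omega)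
  rw [Real.mul_rpow (pow_nonneg hρ.le N) hK.le, ← Real.rpow_natCast ρ N,
    ← Real.rpow_mul hρ.le, mul_inv_cancel₀ hN0, Real.rpow_one, Real.rpow_def_of_pos hK]

set_option maxHeartbeats 1000000 in
/-- Variational principle: if `B_{ψ*τ}` has a strictly positive continuous
eigenfunction `h` with eigenvalue `ρ` equal to the spectral radius (Gelfand),
then the holonomic lifting `μ̂` of the fixed point `μ` of the normalized Markov
operator is an equilibrium state for `ψ`, and
`P(ψ) = ln ρ = lim_N (1/N) ln B_{ψ*τ}^N(1)(x)` uniformly in `x`. -/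
theorem stmt18 {X : Type*} [MetricSpace X] [CompactSpace X]
    [MeasurableSpace X] [BorelSpace X]
    {n : ℕ} (hn : 0 < n)
    (τ : Fin n → X → X) (hτ : ∀ i, Continuous (τ i))
    (ψ : C(X, ℝ)) (hψ : ∀ x, 0 < ψ x)
    (B : C(X, ℝ) →L[ℝ] C(X, ℝ))
    (hB : ∀ (f : C(X, ℝ)) (x : X), B f x = ∑ i : Fin n, ψ (τ i x) * f (τ i x))
    (h : C(X, ℝ)) (hh : ∀ x, 0 < h x) (ρ : ℝ) (hρ : 0 < ρ)
    (heig : B h = ρ • h)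
    (μ : Measure X) [IsProbabilityMeasure μ]
    (hfix : ∀ f : C(X, ℝ),
      ∫ x, ∑ i : Fin n, (ψ (τ i x) * h (τ i x) / (ρ * h x)) * f (τ i x) ∂μ
        = ∫ x, f x ∂μ)
    (μh : Measure (X × Fin n)) [IsProbabilityMeasure μh]
    (hlift : ∀ F : C(X × Fin n, ℝ),
      ∫ q, F q ∂μh
        = ∫ x, ∑ i : Fin n, (ψ (τ i x) * h (τ i x) / (ρ * h x)) * F (x, i) ∂μ) :
    (∀ f : C(X, ℝ), ∫ q : X × Fin n, (f (τ q.2 q.1) - f q.1) ∂μh = 0) ∧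
      ((⨅ g : {g : C(X, ℝ) // ∀ x, 0 < g x},
          ∫ x, Real.log ((∑ i, g.1 (τ i x)) / g.1 x) ∂μ) +
        ∫ x, Real.log (ψ x) ∂μ
        = ⨆ m : {m : Measure (X × Fin n) // IsProbabilityMeasure m ∧
              ∀ f : C(X, ℝ), ∫ q : X × Fin n, (f (τ q.2 q.1) - f q.1) ∂m = 0},
            ((⨅ g : {g : C(X, ℝ) // ∀ x, 0 < g x},
                ∫ x, Real.log ((∑ i, g.1 (τ i x)) / g.1 x)
                  ∂((m.1 : Measure (X × Fin n)).map Prod.fst)) +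
              ∫ x, Real.log (ψ x) ∂((m.1 : Measure (X × Fin n)).map Prod.fst))) ∧
      ((⨆ m : {m : Measure (X × Fin n) // IsProbabilityMeasure m ∧
              ∀ f : C(X, ℝ), ∫ q : X × Fin n, (f (τ q.2 q.1) - f q.1) ∂m = 0},
            ((⨅ g : {g : C(X, ℝ) // ∀ x, 0 < g x},
                ∫ x, Real.log ((∑ i, g.1 (τ i x)) / g.1 x)
                  ∂((m.1 : Measure (X × Fin n)).map Prod.fst)) +
              ∫ x, Real.log (ψ x) ∂((m.1 : Measure (X × Fin n)).map Prod.fst)))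
        = Real.log ρ) ∧
      Tendsto (fun N : ℕ => ‖B ^ N‖ ^ ((N : ℝ)⁻¹)) atTop (nhds ρ) ∧
      TendstoUniformly
        (fun (N : ℕ) (x : X) => (N : ℝ)⁻¹ * Real.log ((B ^ N) 1 x))
        (fun _ => Real.log ρ) atTop := by
  classical
  haveI : OpensMeasurableSpace (X × Fin n) := Prod.opensMeasurableSpace
  haveI hXne : Nonempty X := by
    by_contra hc
    rw [not_nonempty_iff] at hc
    have h0 : μ Set.univ = 0 := by
      rw [Set.univ_eq_empty_iff.2 hc]; exact measure_empty
    rw [measure_univ] at h0; exact one_ne_zero h0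
  haveI : Nonempty {g : C(X, ℝ) // ∀ x, 0 < g x} := ⟨⟨1, fun x => one_pos⟩⟩
  haveI : Nonempty (Fin n) := Fin.pos_iff_nonempty.1 hn
  set p : Fin n → X → ℝ := fun i x => ψ (τ i x) * h (τ i x) / (ρ * h x) with hpdef
  have hρh : ∀ x : X, ρ * h x ≠ 0 := fun x => (mul_pos hρ (hh x)).ne'
  have hppos : ∀ (i : Fin n) (x : X), 0 < p i x :=
    fun i x => div_pos (mul_pos (hψ _) (hh _)) (mul_pos hρ (hh x))
  have hpcont : ∀ i : Fin n, Continuous (p i) := fun i =>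
    Continuous.div ((ψ.continuous.comp (hτ i)).mul (h.continuous.comp (hτ i)))
      (continuous_const.mul h.continuous) hρh
  have hBh : ∀ x : X, ∑ i, ψ (τ i x) * h (τ i x) = ρ * h x := by
    intro x
    have h1 : B h x = (ρ • h) x := by rw [heig]
    rw [hB h x] at h1
    simpa using h1
  have hpsum : ∀ x : X, ∑ i, p i x = 1 := by
    intro x
    simp only [hpdef]
    rw [← Finset.sum_div, hBh x, div_self (hρh x)]
  -- holonomy of μh
  have hol : ∀ f : C(X, ℝ), ∫ q : X × Fin n, (f (τ q.2 q.1) - f q.1) ∂μh = 0 := by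
    intro f
    have hc : Continuous fun q : X × Fin n => f (τ q.2 q.1) - f q.1 :=
      contDiscreteSnd fun i => (f.continuous.comp (hτ i)).sub f.continuous
    have H := hlift ⟨fun q => f (τ q.2 q.1) - f q.1, hc⟩
    simp only [ContinuousMap.coe_mk] at H
    rw [H]
    have e1 : ∀ x : X, ∑ i, p i x * (f (τ i x) - f x)
        = (∑ i, p i x * f (τ i x)) - f x := by
      intro x
      simp only [mul_sub]
      rw [Finset.sum_sub_distrib, ← Finset.sum_mul, hpsum x, one_mul]
    rw [integral_congr_ae (Filter.Eventually.of_forall e1)]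
    have hint1 : Integrable (fun x => ∑ i, p i x * f (τ i x)) μ :=
      contIntegrableAux (continuous_finset_sum _ fun i _ =>
        (hpcont i).mul (f.continuous.comp (hτ i)))
    rw [integral_sub hint1 (contIntegrableAux f.continuous)]
    rw [hfix f]
    ring
  -- marginal of μh is μ (at the level of integrals of continuous functions)
  have marg : ∀ c : X → ℝ, Continuous c →
      ∫ x, c x ∂(μh.map Prod.fst) = ∫ x, c x ∂μ := by
    intro c hc
    rw [integral_map measurable_fst.aemeasurable hc.aestronglyMeasurable]
    have H := hlift ⟨fun q => c q.1, hc.comp continuous_fst⟩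
    simp only [ContinuousMap.coe_mk] at H
    rw [H]
    apply integral_congr_ae (Filter.Eventually.of_forall fun x => ?_)
    rw [← Finset.sum_mul, hpsum x, one_mul]
  -- the key Jensen inequality for the fixed point μ
  have keyineq : ∀ g : C(X, ℝ), (∀ x, 0 < g x) →
      Real.log ρ - ∫ x, Real.log (ψ x) ∂μ
        ≤ ∫ x, Real.log ((∑ i, g (τ i x)) / g x) ∂μ := by
    intro g hg
    set F : X → ℝ := fun t => Real.log (g t) - Real.log (ψ t) - Real.log (h t) with hFdef
    set G : X → ℝ := fun x => Real.log (g x) - Real.log ρ - Real.log (h x) with hGdef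
    have hFc : Continuous F :=
      ((g.continuous.log fun x => (hg x).ne').sub
        (ψ.continuous.log fun x => (hψ x).ne')).sub
        (h.continuous.log fun x => (hh x).ne')
    have hGc : Continuous G :=
      ((g.continuous.log fun x => (hg x).ne').sub continuous_const).sub
        (h.continuous.log fun x => (hh x).ne')
    have hpt : ∀ x : X, ∑ i, p i x * (F (τ i x) - G x)
        ≤ Real.log ((∑ i, g (τ i x)) / g x) := by
      intro x
      have hterm : ∀ i : Fin n,
          Real.log ((g (τ i x) / g x) / p i x) = F (τ i x) - G x := by
        intro i
        rw [Real.log_div (div_pos (hg _) (hg x)).ne' (hppos i x).ne',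
          Real.log_div (hg _).ne' (hg x).ne']
        have : Real.log (p i x)
            = Real.log (ψ (τ i x)) + Real.log (h (τ i x))
              - (Real.log ρ + Real.log (h x)) := by
          simp only [hpdef]
          rw [Real.log_div (mul_pos (hψ _) (hh _)).ne' (hρh x),
            Real.log_mul (hψ _).ne' (hh _).ne', Real.log_mul hρ.ne' (hh x).ne']
        rw [this]
        simp only [hFdef, hGdef]
        ring
      have hgibbs := gibbsIneq (fun i => p i x) (fun i => g (τ i x) / g x)
        (fun i => hppos i x) (hpsum x) (fun i => div_pos (hg _) (hg x))
      rw [← Finset.sum_div] at hgibbs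
      calc ∑ i, p i x * (F (τ i x) - G x)
          = ∑ i, p i x * Real.log ((g (τ i x) / g x) / p i x) :=
            Finset.sum_congr rfl fun i _ => by rw [hterm i]
        _ ≤ Real.log ((∑ i, g (τ i x)) / g x) := hgibbs
    have hint1 : Integrable (fun x => ∑ i, p i x * (F (τ i x) - G x)) μ :=
      contIntegrableAux (continuous_finset_sum _ fun i _ =>
        (hpcont i).mul ((hFc.comp (hτ i)).sub hGc))
    have hsumpos : ∀ x : X, 0 < ∑ i, g (τ i x) := fun x =>
      Finset.sum_pos (fun i _ => hg _) Finset.univ_nonempty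
    have hint2 : Integrable (fun x => Real.log ((∑ i, g (τ i x)) / g x)) μ :=
      contIntegrableAux (Continuous.log
        ((continuous_finset_sum _ fun i _ => g.continuous.comp (hτ i)).div
          g.continuous fun x => (hg x).ne')
        fun x => (div_pos (hsumpos x) (hg x)).ne')
    have e1 : ∫ x, ∑ i, p i x * (F (τ i x) - G x) ∂μ
        = Real.log ρ - ∫ x, Real.log (ψ x) ∂μ := by
      have e2 : ∀ x : X, ∑ i, p i x * (F (τ i x) - G x)
          = (∑ i, p i x * F (τ i x)) - G x := by
        intro x
        simp only [mul_sub]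
        rw [Finset.sum_sub_distrib, ← Finset.sum_mul, hpsum x, one_mul]
      rw [integral_congr_ae (Filter.Eventually.of_forall e2)]
      have hint3 : Integrable (fun x => ∑ i, p i x * F (τ i x)) μ :=
        contIntegrableAux (continuous_finset_sum _ fun i _ =>
          (hpcont i).mul (hFc.comp (hτ i)))
      rw [integral_sub hint3 (contIntegrableAux hGc)]
      have H := hfix ⟨F, hFc⟩
      simp only [ContinuousMap.coe_mk] at H
      rw [H, ← integral_sub (contIntegrableAux hFc) (contIntegrableAux hGc)]
      have e3 : ∀ x : X, F x - G x = Real.log ρ - Real.log (ψ x) := by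
        intro x; simp only [hFdef, hGdef]; ring
      rw [integral_congr_ae (Filter.Eventually.of_forall e3),
        integral_sub (integrable_const _)
          (contIntegrableAux (ψ.continuous.log fun x => (hψ x).ne'))]
      simp
    rw [← e1]
    exact integral_mono hint1 hint2 hpt
  -- value of the candidate function ψ * h
  have hval : ∀ ν : Measure X, IsProbabilityMeasure ν →
      ∫ x, Real.log ((∑ i, (ψ * h) (τ i x)) / (ψ * h) x) ∂ν
        = Real.log ρ - ∫ x, Real.log (ψ x) ∂ν := by
    intro ν hν
    haveI := hν
    have hpt : ∀ x : X, Real.log ((∑ i, (ψ * h) (τ i x)) / (ψ * h) x)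
        = Real.log ρ - Real.log (ψ x) := by
      intro x
      have e : (∑ i, (ψ * h) (τ i x)) = ρ * h x := by
        simpa only [ContinuousMap.mul_apply] using hBh x
      rw [e, ContinuousMap.mul_apply,
        Real.log_div (hρh x) (mul_pos (hψ x) (hh x)).ne',
        Real.log_mul hρ.ne' (hh x).ne', Real.log_mul (hψ x).ne' (hh x).ne']
      ring
    rw [integral_congr_ae (Filter.Eventually.of_forall hpt),
      integral_sub (integrable_const _)
        (contIntegrableAux (ψ.continuous.log fun x => (hψ x).ne'))]
    simp
  have hψhpos : ∀ x : X, 0 < (ψ * h) x := fun x => by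
    rw [ContinuousMap.mul_apply]; exact mul_pos (hψ x) (hh x)
  -- value of the infimum for μ
  have hinfμ : (⨅ g : {g : C(X, ℝ) // ∀ x, 0 < g x},
      ∫ x, Real.log ((∑ i, g.1 (τ i x)) / g.1 x) ∂μ)
      = Real.log ρ - ∫ x, Real.log (ψ x) ∂μ := by
    apply le_antisymm
    · have hbdd : BddBelow (Set.range fun g : {g : C(X, ℝ) // ∀ x, 0 < g x} =>
          ∫ x, Real.log ((∑ i, g.1 (τ i x)) / g.1 x) ∂μ) := by
        refine ⟨Real.log ρ - ∫ x, Real.log (ψ x) ∂μ, ?_⟩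
        rintro y ⟨g, rfl⟩
        exact keyineq g.1 g.2
      refine le_trans (ciInf_le hbdd ⟨ψ * h, hψhpos⟩) ?_
      rw [hval μ inferInstance]
    · exact le_ciInf fun g => keyineq g.1 g.2
  -- upper bound log ρ for every holonomic probability
  have hub : ∀ m : {m : Measure (X × Fin n) // IsProbabilityMeasure m ∧
        ∀ f : C(X, ℝ), ∫ q : X × Fin n, (f (τ q.2 q.1) - f q.1) ∂m = 0},
      ((⨅ g : {g : C(X, ℝ) // ∀ x, 0 < g x},
          ∫ x, Real.log ((∑ i, g.1 (τ i x)) / g.1 x)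
            ∂((m.1 : Measure (X × Fin n)).map Prod.fst)) +
        ∫ x, Real.log (ψ x) ∂((m.1 : Measure (X × Fin n)).map Prod.fst))
        ≤ Real.log ρ := by
    rintro ⟨m, hmp, hmhol⟩
    haveI := hmp
    haveI : IsProbabilityMeasure (m.map Prod.fst) :=
      Measure.isProbabilityMeasure_map measurable_fst.aemeasurable
    have hlb : ∀ g : C(X, ℝ), (∀ x, 0 < g x) →
        (0:ℝ) ≤ ∫ x, Real.log ((∑ i, g (τ i x)) / g x) ∂(m.map Prod.fst) := by
      intro g hg
      have hsumpos : ∀ x : X, 0 < ∑ i, g (τ i x) := fun x =>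
        Finset.sum_pos (fun i _ => hg _) Finset.univ_nonempty
      have hLc : Continuous fun x : X => Real.log ((∑ i, g (τ i x)) / g x) :=
        Continuous.log
          ((continuous_finset_sum _ fun i _ => g.continuous.comp (hτ i)).div
            g.continuous fun x => (hg x).ne')
          fun x => (div_pos (hsumpos x) (hg x)).ne'
      rw [integral_map measurable_fst.aemeasurable hLc.aestronglyMeasurable]
      have H0 := hmhol ⟨fun x => Real.log (g x), g.continuous.log fun x => (hg x).ne'⟩
      simp only [ContinuousMap.coe_mk] at H0
      have hptm : ∀ q : X × Fin n,
          Real.log (g (τ q.2 q.1)) - Real.log (g q.1)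
            ≤ Real.log ((∑ i, g (τ i q.1)) / g q.1) := by
        rintro ⟨x, j⟩
        rw [Real.log_div (hsumpos x).ne' (hg x).ne']
        have : g (τ j x) ≤ ∑ i, g (τ i x) :=
          Finset.single_le_sum (fun i _ => (hg (τ i x)).le) (Finset.mem_univ j)
        exact sub_le_sub_right (Real.log_le_log (hg _) this) _
      have hint1 : Integrable
          (fun q : X × Fin n => Real.log (g (τ q.2 q.1)) - Real.log (g q.1)) m :=
        contIntegrableAux (contDiscreteSnd fun i =>
          ((g.continuous.log fun x => (hg x).ne').comp (hτ i)).sub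
            (g.continuous.log fun x => (hg x).ne'))
      have hint2 : Integrable
          (fun q : X × Fin n => Real.log ((∑ i, g (τ i q.1)) / g q.1)) m :=
        contIntegrableAux (hLc.comp continuous_fst)
      calc (0:ℝ) = ∫ q : X × Fin n,
            (Real.log (g (τ q.2 q.1)) - Real.log (g q.1)) ∂m := H0.symm
        _ ≤ ∫ q : X × Fin n, Real.log ((∑ i, g (τ i q.1)) / g q.1) ∂m :=
            integral_mono hint1 hint2 hptm
    have hbdd : BddBelow (Set.range fun g : {g : C(X, ℝ) // ∀ x, 0 < g x} =>
        ∫ x, Real.log ((∑ i, g.1 (τ i x)) / g.1 x) ∂(m.map Prod.fst)) := by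
      refine ⟨0, ?_⟩
      rintro y ⟨g, rfl⟩
      exact hlb g.1 g.2
    have h1 := ciInf_le hbdd (⟨ψ * h, hψhpos⟩ : {g : C(X, ℝ) // ∀ x, 0 < g x})
    rw [hval (m.map Prod.fst) inferInstance] at h1
    have := add_le_add_right h1 (∫ x, Real.log (ψ x) ∂(m.map Prod.fst))
    linarith
  -- value at μh
  have hvalμh : ((⨅ g : {g : C(X, ℝ) // ∀ x, 0 < g x},
      ∫ x, Real.log ((∑ i, g.1 (τ i x)) / g.1 x) ∂(μh.map Prod.fst)) +
      ∫ x, Real.log (ψ x) ∂(μh.map Prod.fst)) = Real.log ρ := by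
    have e1 : (⨅ g : {g : C(X, ℝ) // ∀ x, 0 < g x},
        ∫ x, Real.log ((∑ i, g.1 (τ i x)) / g.1 x) ∂(μh.map Prod.fst))
        = ⨅ g : {g : C(X, ℝ) // ∀ x, 0 < g x},
          ∫ x, Real.log ((∑ i, g.1 (τ i x)) / g.1 x) ∂μ := by
      apply iInf_congr
      intro g
      have hsumpos : ∀ x : X, 0 < ∑ i, g.1 (τ i x) := fun x =>
        Finset.sum_pos (fun i _ => g.2 _) Finset.univ_nonempty
      exact marg _ (Continuous.log
        ((continuous_finset_sum _ fun i _ => g.1.continuous.comp (hτ i)).div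
          g.1.continuous fun x => (g.2 x).ne')
        fun x => (div_pos (hsumpos x) (g.2 x)).ne')
    rw [e1, marg _ (ψ.continuous.log fun x => (hψ x).ne'), hinfμ]
    ring
  haveI hSne : Nonempty {m : Measure (X × Fin n) // IsProbabilityMeasure m ∧
      ∀ f : C(X, ℝ), ∫ q : X × Fin n, (f (τ q.2 q.1) - f q.1) ∂m = 0} :=
    ⟨⟨μh, inferInstance, hol⟩⟩
  have hsup : (⨆ m : {m : Measure (X × Fin n) // IsProbabilityMeasure m ∧
        ∀ f : C(X, ℝ), ∫ q : X × Fin n, (f (τ q.2 q.1) - f q.1) ∂m = 0},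
      ((⨅ g : {g : C(X, ℝ) // ∀ x, 0 < g x},
          ∫ x, Real.log ((∑ i, g.1 (τ i x)) / g.1 x)
            ∂((m.1 : Measure (X × Fin n)).map Prod.fst)) +
        ∫ x, Real.log (ψ x) ∂((m.1 : Measure (X × Fin n)).map Prod.fst)))
      = Real.log ρ := by
    apply le_antisymm
    · exact ciSup_le hub
    · have hbdd : BddAbove (Set.range fun m : {m : Measure (X × Fin n) //
          IsProbabilityMeasure m ∧
          ∀ f : C(X, ℝ), ∫ q : X × Fin n, (f (τ q.2 q.1) - f q.1) ∂m = 0} =>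
          ((⨅ g : {g : C(X, ℝ) // ∀ x, 0 < g x},
              ∫ x, Real.log ((∑ i, g.1 (τ i x)) / g.1 x)
                ∂((m.1 : Measure (X × Fin n)).map Prod.fst)) +
            ∫ x, Real.log (ψ x) ∂((m.1 : Measure (X × Fin n)).map Prod.fst))) := by
        refine ⟨Real.log ρ, ?_⟩
        rintro y ⟨m, rfl⟩
        exact hub m
      have := le_ciSup hbdd (⟨μh, inferInstance, hol⟩ : {m : Measure (X × Fin n) //
          IsProbabilityMeasure m ∧
          ∀ f : C(X, ℝ), ∫ q : X × Fin n, (f (τ q.2 q.1) - f q.1) ∂m = 0})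
      rw [hvalμh] at this
      exact this
  -- extremes of h
  obtain ⟨xm, -, hxm⟩ := isCompact_univ.exists_isMinOn Set.univ_nonempty h.continuous.continuousOn
  obtain ⟨xM, -, hxM⟩ := isCompact_univ.exists_isMaxOn Set.univ_nonempty h.continuous.continuousOn
  set c := h xm with hcdef
  set C := h xM with hCdef
  have hc : 0 < c := hh xm
  have hC : 0 < C := hh xM
  have hcC : c ≤ C := hxm (Set.mem_univ xM)
  have hcx : ∀ x, c ≤ h x := fun x => hxm (Set.mem_univ x)
  have hxC : ∀ x, h x ≤ C := fun x => hxM (Set.mem_univ x)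
  have hBpos : ∀ (f : C(X,ℝ)), (∀ x, 0 ≤ f x) → ∀ x, 0 ≤ B f x := by
    intro f hf x
    rw [hB]
    exact Finset.sum_nonneg fun i _ => mul_nonneg (hψ _).le (hf _)
  have hpowpos : ∀ (N : ℕ) (f : C(X,ℝ)), (∀ x, 0 ≤ f x) → ∀ x, 0 ≤ (B ^ N) f x := by
    intro N
    induction N with
    | zero => intro f hf x; rw [pow_zero, ContinuousLinearMap.one_apply]; exact hf x
    | succ N ih =>
      intro f hf x
      rw [pow_succ, ContinuousLinearMap.mul_apply]
      exact ih (B f) (hBpos f hf) x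
  have hpowmono : ∀ (N : ℕ) (f g : C(X,ℝ)), (∀ x, f x ≤ g x) →
      ∀ x, (B ^ N) f x ≤ (B ^ N) g x := by
    intro N f g hfg x
    have h0 := hpowpos N (g - f) (fun y => by
      rw [ContinuousMap.sub_apply]; exact sub_nonneg.2 (hfg y)) x
    rw [map_sub, ContinuousMap.sub_apply] at h0
    linarith
  have hpowh : ∀ N : ℕ, (B ^ N) h = ρ ^ N • h := by
    intro N
    induction N with
    | zero => rw [pow_zero, pow_zero, ContinuousLinearMap.one_apply, one_smul]
    | succ N ih =>
      rw [pow_succ, ContinuousLinearMap.mul_apply, heig, _root_.map_smul, ih, smul_smul, ← pow_succ']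
  have hbound : ∀ (N : ℕ) (x : X),
      ρ ^ N * (c / C) ≤ (B ^ N) 1 x ∧ (B ^ N) 1 x ≤ ρ ^ N * (C / c) := by
    intro N x
    have hρN : (0:ℝ) < ρ ^ N := pow_pos hρ N
    have hlow : c * (B ^ N) 1 x ≤ ρ ^ N * h x := by
      have h1 := hpowmono N (c • 1) h (fun y => by
        simp only [ContinuousMap.smul_apply, ContinuousMap.one_apply, smul_eq_mul, mul_one]
        exact hcx y) x
      rw [_root_.map_smul, hpowh N] at h1
      simpa [ContinuousMap.smul_apply, smul_eq_mul] using h1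
    have hhigh : ρ ^ N * h x ≤ C * (B ^ N) 1 x := by
      have h1 := hpowmono N h (C • 1) (fun y => by
        simp only [ContinuousMap.smul_apply, ContinuousMap.one_apply, smul_eq_mul, mul_one]
        exact hxC y) x
      rw [_root_.map_smul, hpowh N] at h1
      simpa [ContinuousMap.smul_apply, smul_eq_mul] using h1
    constructor
    · rw [← mul_div_assoc, div_le_iff₀ hC]
      nlinarith [mul_le_mul_of_nonneg_left (hcx x) hρN.le]
    · rw [← mul_div_assoc, le_div_iff₀ hc]
      nlinarith [mul_le_mul_of_nonneg_left (hxC x) hρN.le]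
  have hnormub : ∀ N : ℕ, ‖B ^ N‖ ≤ ρ ^ N * (C / c) := by
    intro N
    have hM : (0:ℝ) ≤ ρ ^ N * (C / c) := le_of_lt (mul_pos (pow_pos hρ N) (div_pos hC hc))
    apply ContinuousLinearMap.opNorm_le_bound _ hM
    intro f
    rw [ContinuousMap.norm_le _ (mul_nonneg hM (norm_nonneg f))]
    intro x
    rw [Real.norm_eq_abs, abs_le]
    have hfb : ∀ y : X, f y ≤ ‖f‖ :=
      fun y => (le_abs_self _).trans (by simpa [Real.norm_eq_abs] using f.norm_coe_le_norm y)
    have hfb' : ∀ y : X, -‖f‖ ≤ f y := fun y => by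
      have := (by simpa [Real.norm_eq_abs] using f.norm_coe_le_norm y : |f y| ≤ ‖f‖)
      linarith [neg_abs_le (f y)]
    have hub1 : (B ^ N) f x ≤ ‖f‖ * ((B ^ N) 1 x) := by
      have h1 := hpowmono N f (‖f‖ • 1) (fun y => by
        simp only [ContinuousMap.smul_apply, ContinuousMap.one_apply, smul_eq_mul, mul_one]
        exact hfb y) x
      rw [_root_.map_smul] at h1
      simpa [ContinuousMap.smul_apply, smul_eq_mul] using h1
    have hub2 : -(‖f‖ * ((B ^ N) 1 x)) ≤ (B ^ N) f x := by
      have h1 := hpowmono N ((-‖f‖) • 1) f (fun y => by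
        simp only [ContinuousMap.smul_apply, ContinuousMap.one_apply, smul_eq_mul, mul_one]
        exact hfb' y) x
      rw [_root_.map_smul] at h1
      have h2 : ((-‖f‖) • ((B ^ N) 1 : C(X,ℝ))) x = -(‖f‖ * ((B ^ N) 1 x)) := by
        simp [ContinuousMap.smul_apply, smul_eq_mul]
      rw [h2] at h1
      exact h1
    have h3 : (B ^ N) 1 x ≤ ρ ^ N * (C / c) := (hbound N x).2
    have h4 : (0:ℝ) ≤ ‖f‖ := norm_nonneg f
    have h5 : 0 ≤ (B ^ N) 1 x := hpowpos N 1 (fun y => by simp) x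
    constructor <;> nlinarith
  have hnormlb : ∀ N : ℕ, ρ ^ N * (c / C) ≤ ‖B ^ N‖ := by
    intro N
    have x₀ : X := Classical.arbitrary X
    calc ρ ^ N * (c / C) ≤ (B ^ N) 1 x₀ := (hbound N x₀).1
      _ ≤ ‖((B ^ N) 1 : C(X,ℝ))‖ := (le_abs_self _).trans
          (by simpa [Real.norm_eq_abs] using ContinuousMap.norm_coe_le_norm ((B ^ N) 1) x₀)
      _ ≤ ‖B ^ N‖ * ‖(1 : C(X,ℝ))‖ := ContinuousLinearMap.le_opNorm _ _
      _ = ‖B ^ N‖ := by rw [norm_one, mul_one]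
  have part4 : Tendsto (fun N : ℕ => ‖B ^ N‖ ^ ((N : ℝ)⁻¹)) atTop (nhds ρ) := by
    have hlo := rpowLimAux ρ hρ (c / C) (div_pos hc hC)
    have hhi := rpowLimAux ρ hρ (C / c) (div_pos hC hc)
    apply tendsto_of_tendsto_of_tendsto_of_le_of_le' hlo hhi
    · exact Filter.Eventually.of_forall fun N =>
        Real.rpow_le_rpow (le_of_lt (mul_pos (pow_pos hρ N) (div_pos hc hC)))
          (hnormlb N) (inv_nonneg.2 (Nat.cast_nonneg N))
    · exact Filter.Eventually.of_forall fun N =>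
        Real.rpow_le_rpow (norm_nonneg (B ^ N)) (hnormub N) (inv_nonneg.2 (Nat.cast_nonneg N))
  have part5 : TendstoUniformly
      (fun (N : ℕ) (x : X) => (N : ℝ)⁻¹ * Real.log ((B ^ N) 1 x))
      (fun _ => Real.log ρ) atTop := by
    set D := Real.log (C / c) with hDdef
    have hD : 0 ≤ D := Real.log_nonneg ((one_le_div hc).2 hcC)
    rw [Metric.tendstoUniformly_iff]
    intro ε hε
    have hto : Tendsto (fun N : ℕ => (N:ℝ)⁻¹ * D) atTop (nhds 0) := by
      simpa using tendsto_inv_atTop_nhds_zero_nat.mul_const D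
    filter_upwards [hto.eventually (gt_mem_nhds hε), eventually_ge_atTop 1] with N h1 h2 x
    have hN0 : (N:ℝ) ≠ 0 := Nat.cast_ne_zero.2 (by omega)
    have hNpos : (0:ℝ) < (N:ℝ)⁻¹ := by positivity
    have hρN : (0:ℝ) < ρ ^ N := pow_pos hρ N
    have hBx : 0 < (B ^ N) 1 x :=
      lt_of_lt_of_le (mul_pos hρN (div_pos hc hC)) (hbound N x).1
    have hup : Real.log ((B ^ N) 1 x) ≤ N * Real.log ρ + D := by
      have hle := Real.log_le_log hBx (hbound N x).2
      rw [Real.log_mul hρN.ne' (div_pos hC hc).ne', Real.log_pow] at hle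
      rw [hDdef]
      exact hle
    have hdn : N * Real.log ρ - D ≤ Real.log ((B ^ N) 1 x) := by
      have hle := Real.log_le_log (mul_pos hρN (div_pos hc hC)) (hbound N x).1
      rw [Real.log_mul hρN.ne' (div_pos hc hC).ne', Real.log_pow,
        Real.log_div hc.ne' hC.ne'] at hle
      rw [hDdef, Real.log_div hC.ne' hc.ne']
      linarith
    rw [Real.dist_eq, abs_sub_lt_iff]
    have hinvN : (N:ℝ)⁻¹ * (N:ℝ) = 1 := inv_mul_cancel₀ hN0
    have e1 : (N:ℝ)⁻¹ * Real.log ((B ^ N) 1 x) ≤ Real.log ρ + (N:ℝ)⁻¹ * D := by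
      calc (N:ℝ)⁻¹ * Real.log ((B ^ N) 1 x)
          ≤ (N:ℝ)⁻¹ * ((N:ℝ) * Real.log ρ + D) :=
            mul_le_mul_of_nonneg_left hup hNpos.le
        _ = Real.log ρ + (N:ℝ)⁻¹ * D := by
            rw [mul_add, ← mul_assoc, hinvN, one_mul]
    have e2 : Real.log ρ - (N:ℝ)⁻¹ * D ≤ (N:ℝ)⁻¹ * Real.log ((B ^ N) 1 x) := by
      calc Real.log ρ - (N:ℝ)⁻¹ * D
          = (N:ℝ)⁻¹ * ((N:ℝ) * Real.log ρ - D) := by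
            rw [mul_sub, ← mul_assoc, hinvN, one_mul]
        _ ≤ (N:ℝ)⁻¹ * Real.log ((B ^ N) 1 x) :=
            mul_le_mul_of_nonneg_left hdn hNpos.le
    constructor <;> linarith
  refine ⟨hol, ?_, ?_, ?_, ?_⟩
  · rw [hsup, hinfμ]; ring
  · exact hsup
  · exact part4
  · exact part5
end

section
/- Let ψ: X → (0,∞) be continuous and suppose B_{ψ*τ} admits a strictly positive continuous eigenfunction. Then for every holonomic probability ν̂ with marginal ν, the entropy plus energy is bounded by the log spectral radius: h_a(ν̂) + ∫_X ln ψ dν ≤ ln ρ(B_{ψ*τ}), with equality when ν̂ is the holonomic lifting of a fixed point of the normalized Markov operator L_p. -/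
/-!
Write `p_i = (ψ∘τ_i)(h∘τ_i)/(ρh)`. The eigenvalue equation makes `(p_i(x))_i` a probability
vector, so Gibbs' inequality gives `∑ q_i ln p_i ≤ ∑ q_i ln q_i` pointwise. Since
`ln p_i = (ln ψ + ln h)∘τ_i - ln h - ln ρ`, holonomy (`∫ ∑ q_i f∘τ_i dν = ∫ f dν`) integrates the
left side to `∫ ln ψ dν - ln ρ`, with equality throughout when `q = p`.
-/

open MeasureTheory Real Finset

lemma mul_log_sub_mul_log_le {p q : ℝ} (hp : 0 < p) (hq : 0 ≤ q) :
    q * log p - q * log q ≤ p - q := by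
  rcases hq.eq_or_lt with rfl | hq
  · simpa using hp.le
  · have := mul_le_mul_of_nonneg_left (log_le_sub_one_of_pos (div_pos hp hq)) hq.le
    rwa [log_div hp.ne' hq.ne', mul_sub, mul_sub, mul_div_cancel₀ _ hq.ne', mul_one]
      at this

lemma sum_mul_log_le_sum_mul_log {ι : Type*} (s : Finset ι) {p q : ι → ℝ}
    (hp : ∀ i ∈ s, 0 < p i) (hq : ∀ i ∈ s, 0 ≤ q i) (hpq : ∑ i ∈ s, p i ≤ ∑ i ∈ s, q i) :
    ∑ i ∈ s, q i * log (p i) ≤ ∑ i ∈ s, q i * log (q i) := by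
  have := sum_le_sum fun i hi => mul_log_sub_mul_log_le (hp i hi) (hq i hi)
  rw [sum_sub_distrib, sum_sub_distrib] at this
  linarith

lemma abs_mul_log_le_one {t : ℝ} (h0 : 0 ≤ t) (h1 : t ≤ 1) : |t * log t| ≤ 1 := by
  have hneg := negMulLog_nonneg h0 h1
  have hle := negMulLog_le_one_sub_self h0
  rw [negMulLog_eq_neg] at hneg hle
  rw [abs_le]
  constructor <;> linarith

lemma sum_mul_sub_const {ι : Type*} (s : Finset ι) {q a : ι → ℝ} (hq : ∑ i ∈ s, q i = 1)
    (c : ℝ) : ∑ i ∈ s, q i * (a i - c) = ∑ i ∈ s, q i * a i - c := by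
  simp only [mul_sub, sum_sub_distrib, ← sum_mul, hq, one_mul]

lemma le_one_of_sum_eq_one {ι : Type*} [Fintype ι] {w : ι → ℝ} (h0 : ∀ i, 0 ≤ w i)
    (h1 : ∑ i, w i = 1) (i : ι) : w i ≤ 1 :=
  h1 ▸ single_le_sum (fun j _ => h0 j) (mem_univ i)

lemma integrable_sum_mul_log {X : Type*} [MeasurableSpace X] {n : ℕ} {q : Fin n → X → ℝ}
    {ν : Measure X} [IsFiniteMeasure ν] (hqm : ∀ i, Measurable (q i))
    (hq0 : ∀ i x, 0 ≤ q i x) (hq1 : ∀ x, ∑ i, q i x = 1) :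
    Integrable (fun x => ∑ i, q i x * log (q i x)) ν :=
  integrable_finsetSum _ fun i _ =>
    .of_bound ((hqm i).mul (hqm i).log).aestronglyMeasurable 1 (ae_of_all _ fun x =>
      abs_mul_log_le_one (hq0 i x) (le_one_of_sum_eq_one (hq0 · x) (hq1 x) i))

section NormalizedWeight

variable {X : Type*} {n : ℕ} {τ : Fin n → X → X} {ψ h : X → ℝ} {ρ : ℝ}

noncomputable def normalizedWeight (τ : Fin n → X → X) (ψ h : X → ℝ) (ρ : ℝ) (i : Fin n)
    (x : X) : ℝ :=
  ψ (τ i x) * h (τ i x) / (ρ * h x)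

lemma normalizedWeight_pos (hψ : ∀ x, 0 < ψ x) (hh : ∀ x, 0 < h x) (hρ : 0 < ρ) (i : Fin n)
    (x : X) : 0 < normalizedWeight τ ψ h ρ i x :=
  div_pos (mul_pos (hψ _) (hh _)) (mul_pos hρ (hh x))

lemma sum_normalizedWeight (hh : ∀ x, 0 < h x) (hρ : 0 < ρ)
    (heig : ∀ x, ∑ i, ψ (τ i x) * h (τ i x) = ρ * h x) (x : X) :
    ∑ i, normalizedWeight τ ψ h ρ i x = 1 := by
  simp only [normalizedWeight]
  rw [← sum_div, heig x, div_self (mul_pos hρ (hh x)).ne']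

lemma log_normalizedWeight (hψ : ∀ x, 0 < ψ x) (hh : ∀ x, 0 < h x) (hρ : 0 < ρ) (i : Fin n)
    (x : X) : log (normalizedWeight τ ψ h ρ i x) =
      (log (ψ (τ i x)) + log (h (τ i x))) - (log (h x) + log ρ) := by
  rw [normalizedWeight, log_div (mul_pos (hψ _) (hh _)).ne' (mul_pos hρ (hh x)).ne',
    log_mul (hψ _).ne' (hh _).ne', log_mul hρ.ne' (hh x).ne', add_comm (log ρ)]

lemma continuous_normalizedWeight [TopologicalSpace X] (hτ : ∀ i, Continuous (τ i))
    (hψc : Continuous ψ) (hhc : Continuous h) (hh : ∀ x, 0 < h x) (hρ : 0 < ρ) (i : Fin n) :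
    Continuous (normalizedWeight τ ψ h ρ i) :=
  ((hψc.comp (hτ i)).mul (hhc.comp (hτ i))).div (continuous_const.mul hhc)
    fun x => (mul_pos hρ (hh x)).ne'

end NormalizedWeight

section Holonomy

variable {X : Type*} [TopologicalSpace X] [CompactSpace X] [MeasurableSpace X]
  [OpensMeasurableSpace X] {n : ℕ} {τ : Fin n → X → X} {q : Fin n → X → ℝ} {ν : Measure X}

lemma Continuous.integrable_of_compactSpace [IsFiniteMeasure ν] {f : X → ℝ}
    (hf : Continuous f) : Integrable f ν :=
  hf.integrable_of_hasCompactSupport (.of_compactSpace _)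

lemma integrable_sum_mul [IsFiniteMeasure ν] (hqm : ∀ i, Measurable (q i))
    (hq0 : ∀ i x, 0 ≤ q i x) (hq1 : ∀ x, ∑ i, q i x = 1) {g : Fin n → X → ℝ}
    (hg : ∀ i, Continuous (g i)) :
    Integrable (fun x => ∑ i, q i x * g i x) ν := by
  refine integrable_finsetSum _ fun i _ => (hg i).integrable_of_compactSpace.bdd_mul
    (c := 1) (hqm i).aestronglyMeasurable (ae_of_all _ fun x => ?_)
  rw [norm_of_nonneg (hq0 i x)]
  exact le_one_of_sum_eq_one (hq0 · x) (hq1 x) i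

lemma integral_sum_mul_comp_eq_integral [IsFiniteMeasure ν] (hτ : ∀ i, Continuous (τ i))
    (hqm : ∀ i, Measurable (q i)) (hq0 : ∀ i x, 0 ≤ q i x) (hq1 : ∀ x, ∑ i, q i x = 1)
    {νh : Measure (X × Fin n)}
    (hol : ∀ f : C(X, ℝ), ∫ p : X × Fin n, (f (τ p.2 p.1) - f p.1) ∂νh = 0)
    (hdis : ∀ F : C(X × Fin n, ℝ), ∫ p, F p ∂νh = ∫ x, ∑ i, q i x * F (x, i) ∂ν)
    {f : X → ℝ} (hf : Continuous f) :
    ∫ x, ∑ i, q i x * f (τ i x) ∂ν = ∫ x, f x ∂ν := by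
  have hF : Continuous fun p : X × Fin n => f (τ p.2 p.1) - f p.1 :=
    continuous_prod_of_discrete_right.mpr fun i => (hf.comp (hτ i)).sub hf
  have hzero := (hdis ⟨_, hF⟩).symm.trans (hol ⟨f, hf⟩)
  simp only [ContinuousMap.coe_mk, sum_mul_sub_const _ (hq1 _)] at hzero
  rw [integral_sub (integrable_sum_mul hqm hq0 hq1 (g := fun i x => f (τ i x))
    fun i => hf.comp (hτ i)) hf.integrable_of_compactSpace] at hzero
  exact sub_eq_zero.mp hzero

lemma integral_sum_mul_log_normalizedWeight [IsProbabilityMeasure ν]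
    (hτ : ∀ i, Continuous (τ i)) (hqm : ∀ i, Measurable (q i)) (hq0 : ∀ i x, 0 ≤ q i x)
    (hq1 : ∀ x, ∑ i, q i x = 1)
    {νh : Measure (X × Fin n)}
    (hol : ∀ f : C(X, ℝ), ∫ p : X × Fin n, (f (τ p.2 p.1) - f p.1) ∂νh = 0)
    (hdis : ∀ F : C(X × Fin n, ℝ), ∫ p, F p ∂νh = ∫ x, ∑ i, q i x * F (x, i) ∂ν)
    {ψ h : X → ℝ} (hψc : Continuous ψ) (hψ : ∀ x, 0 < ψ x) (hhc : Continuous h)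
    (hh : ∀ x, 0 < h x) {ρ : ℝ} (hρ : 0 < ρ) :
    ∫ x, ∑ i, q i x * log (normalizedWeight τ ψ h ρ i x) ∂ν = ∫ x, log (ψ x) ∂ν - log ρ := by
  have hlogψ : Continuous fun x => log (ψ x) := hψc.log fun x => (hψ x).ne'
  have hlogh : Continuous fun x => log (h x) := hhc.log fun x => (hh x).ne'
  have hpot : Continuous fun x => log (ψ x) + log (h x) := hlogψ.add hlogh
  have hshift : Continuous fun x => log (h x) + log ρ := hlogh.add continuous_const
  simp only [log_normalizedWeight hψ hh hρ, sum_mul_sub_const _ (hq1 _)]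
  rw [integral_sub (integrable_sum_mul hqm hq0 hq1
      (g := fun i x => log (ψ (τ i x)) + log (h (τ i x))) fun i => hpot.comp (hτ i))
      hshift.integrable_of_compactSpace,
    integral_sum_mul_comp_eq_integral hτ hqm hq0 hq1 hol hdis hpot,
    integral_add hlogψ.integrable_of_compactSpace hlogh.integrable_of_compactSpace,
    integral_add hlogh.integrable_of_compactSpace (integrable_const _), integral_const]
  simp only [probReal_univ, one_smul]
  ring

end Holonomy

theorem stmt19_general {X : Type*} [MetricSpace X] [CompactSpace X]
    [MeasurableSpace X] [BorelSpace X]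
    {n : ℕ}
    (τ : Fin n → X → X) (hτ : ∀ i, Continuous (τ i))
    (ψ : C(X, ℝ)) (hψ : ∀ x, 0 < ψ x)
    (h : C(X, ℝ)) (hh : ∀ x, 0 < h x) (ρ : ℝ) (hρ : 0 < ρ)
    (heig : ∀ x, ∑ i : Fin n, ψ (τ i x) * h (τ i x) = ρ * h x)
    (νh : Measure (X × Fin n)) [IsProbabilityMeasure νh]
    (hol : ∀ f : C(X, ℝ), ∫ p : X × Fin n, (f (τ p.2 p.1) - f p.1) ∂νh = 0)
    (q : Fin n → X → ℝ) (hqm : ∀ i, Measurable (q i))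
    (hq0 : ∀ i x, 0 ≤ q i x) (hq1 : ∀ x, ∑ i, q i x = 1)
    (ν : Measure X) (hν : ν = νh.map Prod.fst)
    (hdis : ∀ F : C(X × Fin n, ℝ),
      ∫ p, F p ∂νh = ∫ x, ∑ i, q i x * F (x, i) ∂ν) :
    ((-∫ x, ∑ i, q i x * Real.log (q i x) ∂ν) + ∫ x, Real.log (ψ x) ∂ν
        ≤ Real.log ρ) ∧
      ((∀ i x, q i x = ψ (τ i x) * h (τ i x) / (ρ * h x)) →
        (-∫ x, ∑ i, q i x * Real.log (q i x) ∂ν) + ∫ x, Real.log (ψ x) ∂ν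
          = Real.log ρ) := by
  have : IsProbabilityMeasure ν :=
    hν ▸ Measure.isProbabilityMeasure_map measurable_fst.aemeasurable
  have hcross := integral_sum_mul_log_normalizedWeight hτ hqm hq0 hq1 hol hdis ψ.continuous hψ
    h.continuous hh hρ
  have hlogp : ∀ i, Continuous fun x => log (normalizedWeight τ ψ h ρ i x) := fun i =>
    (continuous_normalizedWeight hτ ψ.continuous h.continuous hh hρ i).log
      fun x => (normalizedWeight_pos hψ hh hρ i x).ne'
  have hgibbs : ∫ x, ∑ i, q i x * log (normalizedWeight τ ψ h ρ i x) ∂ν ≤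
      ∫ x, ∑ i, q i x * log (q i x) ∂ν :=
    integral_mono (integrable_sum_mul hqm hq0 hq1 hlogp) (integrable_sum_mul_log hqm hq0 hq1)
      fun x => sum_mul_log_le_sum_mul_log _ (fun i _ => normalizedWeight_pos hψ hh hρ i x)
        (fun i _ => hq0 i x) (by rw [sum_normalizedWeight hh hρ heig, hq1])
  refine ⟨by linarith, fun hq => ?_⟩
  obtain rfl : q = normalizedWeight τ ψ h ρ := funext fun i => funext (hq i)
  linarith

/-- If `B_{ψ*τ}` has a strictly positive continuous eigenfunction `h` with
eigenvalue `ρ` (the spectral radius), then for every holonomic probability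
measure `ν̂` with marginal `ν` and disintegration weights `q`,
`h_a(ν̂) + ∫ ln ψ dν ≤ ln ρ`, with equality when `ν̂` is the holonomic lifting
of a fixed point of the normalized Markov operator, i.e. when `q` equals the
normalized weights `p_i = (ψ∘τ_i)(h∘τ_i)/(ρh)`. -/
theorem stmt19 {X : Type*} [MetricSpace X] [CompactSpace X]
    [MeasurableSpace X] [BorelSpace X]
    {n : ℕ} (hn : 0 < n)
    (τ : Fin n → X → X) (hτ : ∀ i, Continuous (τ i))
    (ψ : C(X, ℝ)) (hψ : ∀ x, 0 < ψ x)
    (h : C(X, ℝ)) (hh : ∀ x, 0 < h x) (ρ : ℝ) (hρ : 0 < ρ)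
    (heig : ∀ x, ∑ i : Fin n, ψ (τ i x) * h (τ i x) = ρ * h x)
    (νh : Measure (X × Fin n)) [IsProbabilityMeasure νh]
    (hol : ∀ f : C(X, ℝ), ∫ p : X × Fin n, (f (τ p.2 p.1) - f p.1) ∂νh = 0)
    (q : Fin n → X → ℝ) (hqm : ∀ i, Measurable (q i))
    (hq0 : ∀ i x, 0 ≤ q i x) (hq1 : ∀ x, ∑ i, q i x = 1)
    (ν : Measure X) (hν : ν = νh.map Prod.fst)
    (hdis : ∀ F : C(X × Fin n, ℝ),
      ∫ p, F p ∂νh = ∫ x, ∑ i, q i x * F (x, i) ∂ν) :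
    ((-∫ x, ∑ i, q i x * Real.log (q i x) ∂ν) + ∫ x, Real.log (ψ x) ∂ν
        ≤ Real.log ρ) ∧
      ((∀ i x, q i x = ψ (τ i x) * h (τ i x) / (ρ * h x)) →
        (-∫ x, ∑ i, q i x * Real.log (q i x) ∂ν) + ∫ x, Real.log (ψ x) ∂ν
          = Real.log ρ) :=
  stmt19_general τ hτ ψ hψ h hh ρ hρ heig νh hol q hqm hq0 hq1 ν hν hdis
end
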